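/- arXiv:1705.08823 — 8 statements merged into one kernel-verified Lean document; each statement's English description precedes it below -/
import Mathlib

section
/- Under the stated assumptions, for each t ∈ [0,r) and each x ∈ Ω there exists a unique real number τ(t,x) ≥ 0 satisfying ∫_{t−τ(t,x)}^{t} f(A(s,·))(x) ds = ∫_{−τ₀(x)}^{0} f(φ(s,·))(x) ds, and moreover this unique value satisfies 0 ≤ τ(t,x) ≤ t + τ₀(x). -/
/-! The map `τ ↦ ∫_{t-τ}^t f(A(s))(x) ds` is continuous, vanishes at `0` and is strictly
increasing on `[0, ∞)` because the integrand is positive. Since `A = φ` on `(-∞, 0]`, the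
right-hand side is the integral of the same integrand over `[-τ₀(x), 0] ⊆ [-τ₀(x), t]`, so it
lies between the values at `0` and at `t + τ₀(x)`; the intermediate value theorem and strict
monotonicity give existence, uniqueness and the bound. -/

open scoped NNReal
open MeasureTheory intervalIntegral Set

section PositiveIntegrand

variable {F : ℝ → ℝ} {t : ℝ}

lemma ContinuousOn.intervalIntegrable_of_le_of_le (hF : ContinuousOn F (Iic t)) {a b : ℝ}
    (ha : a ≤ t) (hb : b ≤ t) : IntervalIntegrable F volume a b :=
  (hF.mono fun _ hs => hs.2.trans (max_le ha hb)).intervalIntegrable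

lemma strictMonoOn_integral_sub_left (hF : ContinuousOn F (Iic t)) (hpos : ∀ s ≤ t, 0 < F s) :
    StrictMonoOn (fun τ => ∫ s in (t - τ)..t, F s) (Ici 0) := by
  intro a (ha : 0 ≤ a) b _ hab
  have hsplit := integral_add_adjacent_intervals
    (hF.intervalIntegrable_of_le_of_le (a := t - b) (b := t - a) (by linarith) (by linarith))
    (hF.intervalIntegrable_of_le_of_le (a := t - a) (b := t) (by linarith) le_rfl)
  have hgap : 0 < ∫ s in (t - b)..(t - a), F s :=
    intervalIntegral_pos_of_pos_on
      (hF.intervalIntegrable_of_le_of_le (by linarith) (by linarith))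
      (fun s hs => hpos s (by linarith [hs.2])) (by linarith)
  dsimp only
  linarith

lemma continuousOn_integral_sub_left (hF : ContinuousOn F (Iic t)) {T : ℝ} (hT : 0 ≤ T) :
    ContinuousOn (fun τ => ∫ s in (t - τ)..t, F s) (Icc 0 T) := by
  have hsub : uIcc (t - T) t ⊆ Iic t := fun _ hs => hs.2.trans (max_le (by linarith) le_rfl)
  have hprim : ContinuousOn (fun u => ∫ s in u..t, F s) (uIcc (t - T) t) :=
    continuousOn_primitive_interval_left (hF.mono hsub).integrableOn_uIcc
  refine hprim.comp (continuous_const.sub continuous_id).continuousOn fun τ hτ => ?_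
  rw [uIcc_of_le (by linarith)]
  exact ⟨by linarith [hτ.2], by linarith [hτ.1]⟩

theorem existsUnique_integral_sub_left_eq (hF : ContinuousOn F (Iic t))
    (hpos : ∀ s ≤ t, 0 < F s) {c T : ℝ} (hT : 0 ≤ T) (hc : 0 ≤ c)
    (hcT : c ≤ ∫ s in (t - T)..t, F s) :
    (∃! τ, 0 ≤ τ ∧ ∫ s in (t - τ)..t, F s = c) ∧
      ∀ τ, 0 ≤ τ → ∫ s in (t - τ)..t, F s = c → τ ≤ T := by
  have hmono := strictMonoOn_integral_sub_left hF hpos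
  obtain ⟨τ, hτ, hτc⟩ : c ∈ (fun τ => ∫ s in (t - τ)..t, F s) '' Icc 0 T :=
    intermediate_value_Icc hT (continuousOn_integral_sub_left hF hT) ⟨by simpa using hc, hcT⟩
  refine ⟨⟨τ, ⟨hτ.1, hτc⟩, fun σ hσ => hmono.injOn hσ.1 hτ.1 (hσ.2.trans hτc.symm)⟩, ?_⟩
  intro σ hσ hσc
  by_contra! hTσ
  have := hmono hT hσ hTσ
  dsimp only at this
  linarith

end PositiveIntegrand

theorem stmt_0_general
    {n : ℕ} (Ω : Set (EuclideanSpace ℝ (Fin n))) [CompactSpace Ω]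
    (f : C(Ω, ℝ) → C(Ω, ℝ)) (Kf : ℝ≥0) (hf_lip : LipschitzWith Kf f)
    (Mbar : ℝ)
    (hf_bdd : ∀ (ψ : C(Ω, ℝ)) (x : Ω), 0 < f ψ x ∧ f ψ x ≤ Mbar)
    (φ : ℝ → C(Ω, ℝ))
    (τ₀ : C(Ω, ℝ)) (hτ₀ : ∀ x, 0 ≤ τ₀ x)
    (r : EReal)
    (A : ℝ → C(Ω, ℝ)) (hAcont : ContinuousOn A {t : ℝ | (t : EReal) < r})
    (hA0 : ∀ t ≤ (0 : ℝ), A t = φ t) :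
    ∀ t : ℝ, 0 ≤ t → (t : EReal) < r → ∀ x : Ω,
      (∃! τ : ℝ, 0 ≤ τ ∧
        (∫ s in (t - τ)..t, f (A s) x) = ∫ s in (-(τ₀ x))..(0 : ℝ), f (φ s) x) ∧
      (∀ τ : ℝ, 0 ≤ τ →
        (∫ s in (t - τ)..t, f (A s) x) = (∫ s in (-(τ₀ x))..(0 : ℝ), f (φ s) x) →
        τ ≤ t + τ₀ x) := by
  intro t ht htr x
  have hF : ContinuousOn (fun s => f (A s) x) (Iic t) :=
    ((continuous_eval_const x).comp hf_lip.continuous).comp_continuousOn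
      (hAcont.mono fun s (hs : s ≤ t) => (EReal.coe_le_coe_iff.mpr hs).trans_lt htr)
  have hpos : ∀ s, 0 < f (A s) x := fun s => (hf_bdd (A s) x).1
  have hτ₀x := hτ₀ x
  have hφA : ∫ s in (-(τ₀ x))..0, f (φ s) x = ∫ s in (-(τ₀ x))..0, f (A s) x :=
    integral_congr fun s hs => by
      rw [hA0 s (hs.2.trans (max_le (by linarith) le_rfl))]
  rw [hφA]
  apply existsUnique_integral_sub_left_eq hF (fun s _ => hpos s) (by linarith)
  · exact integral_nonneg (by linarith) fun s _ => (hpos s).le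
  · rw [show t - (t + τ₀ x) = -(τ₀ x) by ring]
    exact integral_mono_interval le_rfl (by linarith) ht
      (Filter.Eventually.of_forall fun s => (hpos s).le)
      (hF.intervalIntegrable_of_le_of_le (by linarith) le_rfl)

/-- For each `t ∈ [0,r)` and each `x ∈ Ω` there exists a unique
`τ(t,x) ≥ 0` satisfying the integral equation
`∫_{t−τ(t,x)}^{t} f(A(s,·))(x) ds = ∫_{−τ₀(x)}^{0} f(φ(s,·))(x) ds`,
and moreover the unique value satisfies `0 ≤ τ(t,x) ≤ t + τ₀(x)`. -/
theorem stmt_0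
    {n : ℕ} (hn : 1 ≤ n)
    (Ω : Set (EuclideanSpace ℝ (Fin n))) (hΩ : IsCompact Ω) [CompactSpace Ω]
    (f : C(Ω, ℝ) → C(Ω, ℝ)) (Kf : ℝ≥0) (hf_lip : LipschitzWith Kf f)
    (hf_mono : ∀ u v : C(Ω, ℝ), u ≤ v → f v ≤ f u)
    (Mbar : ℝ) (hMbar : 0 < Mbar)
    (hf_bdd : ∀ (ψ : C(Ω, ℝ)) (x : Ω), 0 < f ψ x ∧ f ψ x ≤ Mbar)
    (φ : ℝ → C(Ω, ℝ)) (hφcont : ContinuousOn φ (Set.Iic 0))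
    (τ₀ : C(Ω, ℝ)) (hτ₀ : ∀ x, 0 ≤ τ₀ x)
    (r : EReal) (hr : 0 < r)
    (A : ℝ → C(Ω, ℝ)) (hAcont : ContinuousOn A {t : ℝ | (t : EReal) < r})
    (hA0 : ∀ t ≤ (0 : ℝ), A t = φ t) :
    ∀ t : ℝ, 0 ≤ t → (t : EReal) < r → ∀ x : Ω,
      (∃! τ : ℝ, 0 ≤ τ ∧
        (∫ s in (t - τ)..t, f (A s) x) = ∫ s in (-(τ₀ x))..(0 : ℝ), f (φ s) x) ∧
      (∀ τ : ℝ, 0 ≤ τ →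
        (∫ s in (t - τ)..t, f (A s) x) = (∫ s in (-(τ₀ x))..(0 : ℝ), f (φ s) x) →
        τ ≤ t + τ₀ x) :=
  stmt_0_general Ω f Kf hf_lip Mbar hf_bdd φ τ₀ hτ₀ r A hAcont hA0
end

section
/- Let τ(t,x) be, for each t ∈ [0,r) and x ∈ Ω, the unique nonnegative solution of ∫_{t−τ(t,x)}^{t} f(A(s,·))(x) ds = ∫_{−τ₀(x)}^{0} f(φ(s,·))(x) ds. Then for each fixed x ∈ Ω the map t ↦ t − τ(t,x) is non-decreasing on [0,r); that is, t₁ ≤ t₂ in [0,r) implies t₁ − τ(t₁,x) ≤ t₂ − τ(t₂,x). -/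
open scoped NNReal
open MeasureTheory intervalIntegral Set

/-! Since the integrand is positive, `∫ s in a..t, g s` is strictly decreasing in `a` and
non-decreasing in `t`. If `t₁ ≤ t₂` but `t₂ - τ t₂ x < t₁ - τ t₁ x`, the window ending at `t₂`
contains the one ending at `t₁` plus a piece of positive mass, so the two integrals cannot both
equal the same constant. -/

theorem le_of_intervalIntegral_eq_of_pos {g : ℝ → ℝ} {a₁ a₂ t₁ t₂ : ℝ}
    (hcont : ContinuousOn g (Iic t₂)) (hpos : ∀ s ≤ t₂, 0 < g s)
    (ha₁ : a₁ ≤ t₁) (ht : t₁ ≤ t₂)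
    (heq : ∫ s in a₂..t₂, g s = ∫ s in a₁..t₁, g s) : a₁ ≤ a₂ := by
  by_contra! ha
  have hint {u v : ℝ} (huv : u ≤ v) (hv : v ≤ t₂) : IntervalIntegrable g volume u v :=
    (hcont.mono (Icc_subset_Iic_self.trans (Iic_subset_Iic.mpr hv))).intervalIntegrable_of_Icc huv
  have hsplit : ∫ s in a₂..t₂, g s =
      (∫ s in a₂..a₁, g s) + (∫ s in a₁..t₁, g s) + ∫ s in t₁..t₂, g s := by
    rw [integral_add_adjacent_intervals (hint ha.le (ha₁.trans ht)) (hint ha₁ ht),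
      integral_add_adjacent_intervals (hint (ha.le.trans ha₁) ht) (hint ht le_rfl)]
  have hgap : 0 < ∫ s in a₂..a₁, g s :=
    intervalIntegral_pos_of_pos_on (hint ha.le (ha₁.trans ht))
      (fun s hs => hpos s (hs.2.le.trans (ha₁.trans ht))) ha
  have htail : 0 ≤ ∫ s in t₁..t₂, g s :=
    integral_nonneg ht fun s hs => (hpos s hs.2).le
  linarith

theorem stmt_1_general
    {n : ℕ}
    (Ω : Set (EuclideanSpace ℝ (Fin n))) [CompactSpace Ω]
    (f : C(Ω, ℝ) → C(Ω, ℝ)) (Kf : ℝ≥0) (hf_lip : LipschitzWith Kf f)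
    (Mbar : ℝ)
    (hf_bdd : ∀ (ψ : C(Ω, ℝ)) (x : Ω), 0 < f ψ x ∧ f ψ x ≤ Mbar)
    (φ : ℝ → C(Ω, ℝ))
    (τ₀ : C(Ω, ℝ))
    (r : EReal)
    (A : ℝ → C(Ω, ℝ)) (hAcont : ContinuousOn A {t : ℝ | (t : EReal) < r})
    (τ : ℝ → Ω → ℝ)
    (hτ : ∀ t : ℝ, 0 ≤ t → (t : EReal) < r → ∀ x : Ω, 0 ≤ τ t x ∧
      (∫ s in (t - τ t x)..t, f (A s) x) = ∫ s in (-(τ₀ x))..(0 : ℝ), f (φ s) x) :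
    ∀ x : Ω, ∀ t₁ t₂ : ℝ, 0 ≤ t₁ → 0 ≤ t₂ → (t₁ : EReal) < r → (t₂ : EReal) < r →
      t₁ ≤ t₂ → t₁ - τ t₁ x ≤ t₂ - τ t₂ x := by
  intro x t₁ t₂ ht₁ ht₂ hr₁ hr₂ h12
  obtain ⟨hτ₁, heq₁⟩ := hτ t₁ ht₁ hr₁ x
  obtain ⟨-, heq₂⟩ := hτ t₂ ht₂ hr₂ x
  have hIic : Iic t₂ ⊆ {t : ℝ | (t : EReal) < r} := fun s hs =>
    (EReal.coe_le_coe_iff.mpr hs).trans_lt hr₂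
  have hcont : ContinuousOn (fun s => f (A s) x) (Iic t₂) :=
    (continuous_eval_const x).comp_continuousOn (hf_lip.continuous.comp_continuousOn hAcont)
      |>.mono hIic
  exact le_of_intervalIntegral_eq_of_pos hcont (fun s _ => (hf_bdd (A s) x).1)
    (sub_le_self t₁ hτ₁) h12 (heq₂.trans heq₁.symm)

/-- for each fixed x ∈ Ω the map t ↦ t − τ(t,x) is non-decreasing on [0,r). -/
theorem stmt_1
    {n : ℕ} (hn : 1 ≤ n)
    (Ω : Set (EuclideanSpace ℝ (Fin n))) (hΩ : IsCompact Ω) [CompactSpace Ω]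
    (f : C(Ω, ℝ) → C(Ω, ℝ)) (Kf : ℝ≥0) (hf_lip : LipschitzWith Kf f)
    (hf_mono : ∀ u v : C(Ω, ℝ), u ≤ v → f v ≤ f u)
    (Mbar : ℝ) (hMbar : 0 < Mbar)
    (hf_bdd : ∀ (ψ : C(Ω, ℝ)) (x : Ω), 0 < f ψ x ∧ f ψ x ≤ Mbar)
    (φ : ℝ → C(Ω, ℝ)) (hφcont : ContinuousOn φ (Set.Iic 0))
    (τ₀ : C(Ω, ℝ)) (hτ₀ : ∀ x, 0 ≤ τ₀ x)
    (r : EReal) (hr : 0 < r)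
    (A : ℝ → C(Ω, ℝ)) (hAcont : ContinuousOn A {t : ℝ | (t : EReal) < r})
    (hA0 : ∀ t ≤ (0 : ℝ), A t = φ t)
    (τ : ℝ → Ω → ℝ)
    (hτ : ∀ t : ℝ, 0 ≤ t → (t : EReal) < r → ∀ x : Ω, 0 ≤ τ t x ∧
      (∫ s in (t - τ t x)..t, f (A s) x) = ∫ s in (-(τ₀ x))..(0 : ℝ), f (φ s) x) :
    ∀ x : Ω, ∀ t₁ t₂ : ℝ, 0 ≤ t₁ → 0 ≤ t₂ → (t₁ : EReal) < r → (t₂ : EReal) < r →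
      t₁ ≤ t₂ → t₁ - τ t₁ x ≤ t₂ - τ t₂ x :=
  stmt_1_general Ω f Kf hf_lip Mbar hf_bdd φ τ₀ r A hAcont τ hτ
end

section
/- Let τ(t,x) be, for each t ∈ [0,r) and x ∈ Ω, the unique nonnegative solution of ∫_{t−τ(t,x)}^{t} f(A(s,·))(x) ds = ∫_{−τ₀(x)}^{0} f(φ(s,·))(x) ds. Then for each fixed t ∈ [0,r) the map x ↦ τ(t,x) is continuous on Ω, i.e. τ(t,·) ∈ C(Ω). -/
open scoped NNReal
open MeasureTheory intervalIntegral Set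

/-!
Fix `t`. Truncating `A` at `t` and `φ` at `0` makes `s ↦ f (A s)` and `s ↦ f (φ s)` continuous
maps `ℝ → C(Ω, ℝ)`, hence jointly continuous in `(x, s)`. The left-hand side
`G θ x = ∫ s in t - θ..t, f (A s) x` is then continuous in `x` and, since `f > 0`, strictly
increasing in `θ`; the right-hand side `R x` is continuous in `x`. A solution `θ = τ t x` of
`G θ x = R x` is then continuous: if `a < τ t x₀` then `G a x₀ < R x₀`, and this strict
inequality persists for `x` near `x₀`, forcing `a < τ t x`; symmetrically from above.
-/

theorem continuous_of_strictMono_of_apply_eq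
    {X α β : Type*} [TopologicalSpace X]
    [LinearOrder α] [TopologicalSpace α] [OrderTopology α]
    [LinearOrder β] [TopologicalSpace β] [OrderClosedTopology β]
    {G : α → X → β} {R : X → β} {θ : X → α}
    (hG : ∀ a, Continuous (G a)) (hG_mono : ∀ x, StrictMono (G · x)) (hR : Continuous R)
    (hθ : ∀ x, G (θ x) x = R x) :
    Continuous θ := by
  refine continuous_iff_continuousAt.2 fun x₀ =>
    tendsto_order.2 ⟨fun a ha => ?_, fun a ha => ?_⟩
  · have hlt : G a x₀ < R x₀ := hθ x₀ ▸ hG_mono x₀ ha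
    filter_upwards [(hG a).continuousAt.eventually_lt hR.continuousAt hlt] with x hx
    exact (hG_mono x).lt_iff_lt.1 (hθ x ▸ hx)
  · have hlt : R x₀ < G a x₀ := hθ x₀ ▸ hG_mono x₀ ha
    filter_upwards [hR.continuousAt.eventually_lt (hG a).continuousAt hlt] with x hx
    exact (hG_mono x).lt_iff_lt.1 (hθ x ▸ hx)

theorem continuous_comp_min_const {E : Type*} [TopologicalSpace E] {F : ℝ → E} {b : ℝ}
    {s : Set ℝ} (hF : ContinuousOn F s) (hs : Iic b ⊆ s) :
    Continuous fun u => F (min u b) :=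
  hF.comp_continuous (continuous_id.min continuous_const) fun u => hs (min_le_right u b)

theorem integral_comp_min_const {E : Type*} [NormedAddCommGroup E] [NormedSpace ℝ E]
    (F : ℝ → E) {a b : ℝ} (hab : a ≤ b) :
    ∫ u in a..b, F (min u b) = ∫ u in a..b, F u :=
  integral_congr fun u hu => by rw [uIcc_of_le hab] at hu; rw [min_eq_left hu.2]

theorem strictAnti_integral_of_pos {g : ℝ → ℝ} (hg : Continuous g) (hpos : ∀ u, 0 < g u)
    (b : ℝ) : StrictAnti fun a => ∫ u in a..b, g u := by
  intro a a' haa'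
  dsimp only
  rw [← integral_add_adjacent_intervals (hg.intervalIntegrable a a') (hg.intervalIntegrable a' b)]
  have : 0 < ∫ u in a..a', g u :=
    intervalIntegral_pos_of_pos_on (hg.intervalIntegrable a a') (fun u _ => hpos u) haa'
  linarith

theorem continuous_parametric_intervalIntegral_of_continuous_endpoints
    {X : Type*} [TopologicalSpace X] {F : X → ℝ → ℝ} (hF : Continuous (Function.uncurry F))
    {a b : X → ℝ} (ha : Continuous a) (hb : Continuous b) :
    Continuous fun x => ∫ u in a x..b x, F x u := by
  have hint : ∀ x c d, IntervalIntegrable (F x) volume c d := fun x =>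
    (hF.comp (continuous_const.prodMk continuous_id)).intervalIntegrable
  have hsplit : (fun x => ∫ u in a x..b x, F x u) =
      fun x => (∫ u in 0..b x, F x u) - ∫ u in 0..a x, F x u :=
    funext fun x => (integral_interval_sub_left (hint _ _ _) (hint _ _ _)).symm
  rw [hsplit]
  exact (continuous_parametric_intervalIntegral_of_continuous hF hb).sub
    (continuous_parametric_intervalIntegral_of_continuous hF ha)

theorem continuous_uncurry_apply_of_continuous
    {X : Type*} [TopologicalSpace X] [LocallyCompactSpace X]
    {g : ℝ → C(X, ℝ)} (hg : Continuous g) :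
    Continuous (Function.uncurry fun (x : X) (u : ℝ) => g u x) :=
  (ContinuousMap.continuous_uncurry_of_continuous ⟨g, hg⟩).comp continuous_swap

theorem stmt_2_general
    {n : ℕ}
    (Ω : Set (EuclideanSpace ℝ (Fin n))) [CompactSpace Ω]
    (f : C(Ω, ℝ) → C(Ω, ℝ)) (Kf : ℝ≥0) (hf_lip : LipschitzWith Kf f)
    (Mbar : ℝ)
    (hf_bdd : ∀ (ψ : C(Ω, ℝ)) (x : Ω), 0 < f ψ x ∧ f ψ x ≤ Mbar)
    (φ : ℝ → C(Ω, ℝ)) (hφcont : ContinuousOn φ (Set.Iic 0))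
    (τ₀ : C(Ω, ℝ)) (hτ₀ : ∀ x, 0 ≤ τ₀ x)
    (r : EReal)
    (A : ℝ → C(Ω, ℝ)) (hAcont : ContinuousOn A {t : ℝ | (t : EReal) < r})
    (τ : ℝ → Ω → ℝ)
    (hτ : ∀ t : ℝ, 0 ≤ t → (t : EReal) < r → ∀ x : Ω, 0 ≤ τ t x ∧
      (∫ s in (t - τ t x)..t, f (A s) x) = ∫ s in (-(τ₀ x))..(0 : ℝ), f (φ s) x) :
    ∀ t : ℝ, 0 ≤ t → (t : EReal) < r → Continuous (fun x : Ω => τ t x) := by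
  intro t ht htr
  have hA_trunc := continuous_uncurry_apply_of_continuous <| hf_lip.continuous.comp <|
    continuous_comp_min_const hAcont fun s hs => (EReal.coe_le_coe_iff.2 hs).trans_lt htr
  have hφ_trunc := continuous_uncurry_apply_of_continuous <| hf_lip.continuous.comp <|
    continuous_comp_min_const hφcont subset_rfl
  refine continuous_of_strictMono_of_apply_eq
    (G := fun θ x => ∫ s in (t - θ)..t, f (A (min s t)) x)
    (R := fun x => ∫ s in (-(τ₀ x))..0, f (φ (min s 0)) x)
    (fun θ => continuous_parametric_intervalIntegral_of_continuous_endpoints hA_trunc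
      continuous_const continuous_const)
    (fun x => (strictAnti_integral_of_pos (hA_trunc.comp (continuous_const.prodMk continuous_id))
      (fun s => (hf_bdd _ x).1) t).comp fun _ _ h => sub_lt_sub_left h t)
    (continuous_parametric_intervalIntegral_of_continuous_endpoints hφ_trunc
      τ₀.continuous.neg continuous_const)
    fun x => ?_
  obtain ⟨hτ_nonneg, hτ_eq⟩ := hτ t ht htr x
  rw [integral_comp_min_const (fun s => f (A s) x) (by linarith),
    integral_comp_min_const (fun s => f (φ s) x) (by linarith [hτ₀ x]), hτ_eq]

/-- for each fixed t ∈ [0,r) the map x ↦ τ(t,x) is continuous on Ω. -/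
theorem stmt_2
    {n : ℕ} (hn : 1 ≤ n)
    (Ω : Set (EuclideanSpace ℝ (Fin n))) (hΩ : IsCompact Ω) [CompactSpace Ω]
    (f : C(Ω, ℝ) → C(Ω, ℝ)) (Kf : ℝ≥0) (hf_lip : LipschitzWith Kf f)
    (hf_mono : ∀ u v : C(Ω, ℝ), u ≤ v → f v ≤ f u)
    (Mbar : ℝ) (hMbar : 0 < Mbar)
    (hf_bdd : ∀ (ψ : C(Ω, ℝ)) (x : Ω), 0 < f ψ x ∧ f ψ x ≤ Mbar)
    (φ : ℝ → C(Ω, ℝ)) (hφcont : ContinuousOn φ (Set.Iic 0))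
    (τ₀ : C(Ω, ℝ)) (hτ₀ : ∀ x, 0 ≤ τ₀ x)
    (r : EReal) (hr : 0 < r)
    (A : ℝ → C(Ω, ℝ)) (hAcont : ContinuousOn A {t : ℝ | (t : EReal) < r})
    (hA0 : ∀ t ≤ (0 : ℝ), A t = φ t)
    (τ : ℝ → Ω → ℝ)
    (hτ : ∀ t : ℝ, 0 ≤ t → (t : EReal) < r → ∀ x : Ω, 0 ≤ τ t x ∧
      (∫ s in (t - τ t x)..t, f (A s) x) = ∫ s in (-(τ₀ x))..(0 : ℝ), f (φ s) x) :
    ∀ t : ℝ, 0 ≤ t → (t : EReal) < r → Continuous (fun x : Ω => τ t x) :=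
  stmt_2_general Ω f Kf hf_lip Mbar hf_bdd φ hφcont τ₀ hτ₀ r A hAcont τ hτ
end

section
/- Let τ(t,x) be, for each t ∈ [0,r) and x ∈ Ω, the unique nonnegative solution of ∫_{t−τ(t,x)}^{t} f(A(s,·))(x) ds = ∫_{−τ₀(x)}^{0} f(φ(s,·))(x) ds. Then for each fixed x ∈ Ω the map t ↦ τ(t,x) is continuously differentiable on [0,r) and satisfies the ordinary differential equation ∂_t τ(t,x) = 1 − f(A(t,·))(x)/f(A(t−τ(t,x),·))(x) for all t ∈ [0,r), together with the initial condition τ(0,x) = τ₀(x). -/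
/-!
Fix `x` and let `F` be a primitive of the positive continuous function `h s = f (A s) x`. The
integral equation says `F (t - τ t x) = F t - c` for a constant `c`. Since `F` is strictly
increasing, this determines `σ t = t - τ t x`, gives `τ 0 x = τ₀ x` (at `t = 0` both `-τ 0 x` and
`-τ₀ x` solve it, as `A = φ` on `(-∞, 0]`), and forces `σ` to be continuous; differentiating
`F ∘ σ = F - c` then yields `σ' t = h t / h (σ t)`, whence the equation for `τ = id - σ`.
-/

open scoped NNReal
open MeasureTheory intervalIntegral Set Filter Topology

theorem HasDerivWithinAt.of_comp_left {𝕜 : Type*} [NontriviallyNormedField 𝕜] {f g h : 𝕜 → 𝕜}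
    {f' h' a : 𝕜} {s : Set 𝕜} (hg : ContinuousWithinAt g s a) (hf : HasDerivAt f f' (g a))
    (hh : HasDerivWithinAt h h' s a) (hf' : f' ≠ 0) (hcomp : f ∘ g =ᶠ[𝓝[s] a] h) (ha : a ∈ s) :
    HasDerivWithinAt g (h' / f') s a := by
  have hg' : Tendsto g (𝓝[s] a) (𝓝[univ] (g a)) := by simpa using hg.tendsto
  convert! (hf.hasDerivWithinAt (s := univ)).hasFDerivWithinAt.of_comp_of_leftInverse hg' hh hcomp
    (f'symm := .toSpanSingleton 𝕜 f'⁻¹) (fun _ ↦ by simp [hf']) ha |>.hasDerivWithinAt using 1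
  simp [div_eq_mul_inv]

theorem StrictMonoOn.tendsto_of_tendsto_comp {ι α β : Type*} [LinearOrder α] [TopologicalSpace α]
    [OrderTopology α] [DenselyOrdered α] [LinearOrder β] [TopologicalSpace β] [OrderTopology β]
    {F : α → β} {U : Set α} (hF : StrictMonoOn F U) (hU : IsOpen U) {u : α} (hu : u ∈ U)
    {σ : ι → α} {l : Filter ι} (hσU : ∀ᶠ i in l, σ i ∈ U) (hlim : Tendsto (F ∘ σ) l (𝓝 (F u))) :
    Tendsto σ l (𝓝 u) := by
  refine tendsto_order.2 ⟨fun a hau => ?_, fun b hub => ?_⟩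
  · obtain ⟨a', ⟨haa', ha'u⟩, hsub⟩ := exists_Ioc_subset_of_mem_nhds' (hU.mem_nhds hu) hau
    obtain ⟨p, hp⟩ := exists_between ha'u
    have hpU : p ∈ U := hsub ⟨hp.1, hp.2.le⟩
    filter_upwards [hσU, hlim.eventually (lt_mem_nhds (hF hpU hu hp.2))] with i hiU hi
    exact haa'.trans_lt (hp.1.trans (hF.lt_iff_lt hpU hiU |>.1 hi))
  · obtain ⟨b', ⟨hub', hb'b⟩, hsub⟩ := exists_Ico_subset_of_mem_nhds' (hU.mem_nhds hu) hub
    obtain ⟨p, hp⟩ := exists_between hub'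
    have hpU : p ∈ U := hsub ⟨hp.1.le, hp.2⟩
    filter_upwards [hσU, hlim.eventually (gt_mem_nhds (hF hu hpU hp.1))] with i hiU hi
    exact ((hF.lt_iff_lt hiU hpU).1 hi).trans (hp.2.trans_le hb'b)

section Primitive

variable {h : ℝ → ℝ} {S : Set ℝ}

theorem ContinuousOn.hasDerivAt_integral_of_isOpen (hh : ContinuousOn h S) (hS : IsOpen S)
    (hSc : S.OrdConnected) {a u : ℝ} (ha : a ∈ S) (hu : u ∈ S) :
    HasDerivAt (fun t => ∫ s in a..t, h s) (h u) u :=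
  integral_hasDerivAt_right ((hh.mono (hSc.uIcc_subset ha hu)).intervalIntegrable)
    (hh.stronglyMeasurableAtFilter hS u hu) (hh.continuousAt (hS.mem_nhds hu))

theorem ContinuousOn.strictMonoOn_integral_of_pos (hh : ContinuousOn h S) (hSc : S.OrdConnected)
    (hpos : ∀ s ∈ S, 0 < h s) {a : ℝ} (ha : a ∈ S) :
    StrictMonoOn (fun t => ∫ s in a..t, h s) S := by
  intro u hu v hv huv
  have hint : ∀ {b c}, b ∈ S → c ∈ S → IntervalIntegrable h volume b c :=
    fun hb hc => (hh.mono (hSc.uIcc_subset hb hc)).intervalIntegrable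
  rw [← sub_pos, integral_interval_sub_left (hint ha hv) (hint ha hu)]
  exact intervalIntegral_pos_of_pos_on (hint hu hv)
    (fun s hs => hpos s (hSc.out hu hv (Ioo_subset_Icc_self hs))) huv

end Primitive

theorem hasDerivWithinAt_of_forall_integral_eq {h σ : ℝ → ℝ} {S D : Set ℝ} {c t : ℝ}
    (hS : IsOpen S) (hSc : S.OrdConnected) (hh : ContinuousOn h S) (hpos : ∀ s ∈ S, 0 < h s)
    (hDS : D ⊆ S) (hσS : ∀ s ∈ D, σ s ∈ S) (heq : ∀ s ∈ D, ∫ u in σ s..s, h u = c) (ht : t ∈ D) :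
    HasDerivWithinAt σ (h t / h (σ t)) D t := by
  set F : ℝ → ℝ := fun u => ∫ s in t..u, h s
  have hF : ∀ u ∈ S, HasDerivAt F (h u) u := fun u hu =>
    hh.hasDerivAt_integral_of_isOpen hS hSc (hDS ht) hu
  have hcomp : F ∘ σ =ᶠ[𝓝[D] t] fun s => F s - c := by
    filter_upwards [self_mem_nhdsWithin] with s hs
    have hint : ∀ {b}, b ∈ S → IntervalIntegrable h volume t b :=
      fun hb => (hh.mono (hSc.uIcc_subset (hDS ht) hb)).intervalIntegrable
    rw [← heq s hs, ← integral_interval_sub_left (hint (hDS hs)) (hint (hσS s hs))]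
    simp [F]
  have hσ : ContinuousWithinAt σ D t := by
    refine (hh.strictMonoOn_integral_of_pos hSc hpos (hDS ht)).tendsto_of_tendsto_comp hS
      (hσS t ht) (eventually_nhdsWithin_of_forall hσS) ?_
    have hlim : Tendsto (fun s => F s - c) (𝓝[D] t) (𝓝 (F (σ t))) := by
      rw [show F (σ t) = F t - c from hcomp.self_of_nhdsWithin ht]
      exact ((hF t (hDS ht)).continuousAt.tendsto.sub_const c).mono_left nhdsWithin_le_nhds
    exact hlim.congr' hcomp.symm
  exact HasDerivWithinAt.of_comp_left hσ (hF _ (hσS t ht))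
    ((hF t (hDS ht)).hasDerivWithinAt.sub_const c) (hpos _ (hσS t ht)).ne' hcomp ht

theorem stmt_3_general
    {n : ℕ}
    (Ω : Set (EuclideanSpace ℝ (Fin n))) [CompactSpace Ω]
    (f : C(Ω, ℝ) → C(Ω, ℝ)) (Kf : ℝ≥0) (hf_lip : LipschitzWith Kf f)
    (Mbar : ℝ)
    (hf_bdd : ∀ (ψ : C(Ω, ℝ)) (x : Ω), 0 < f ψ x ∧ f ψ x ≤ Mbar)
    (φ : ℝ → C(Ω, ℝ))
    (τ₀ : C(Ω, ℝ)) (hτ₀ : ∀ x, 0 ≤ τ₀ x)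
    (r : EReal) (hr : 0 < r)
    (A : ℝ → C(Ω, ℝ)) (hAcont : ContinuousOn A {t : ℝ | (t : EReal) < r})
    (hA0 : ∀ t ≤ (0 : ℝ), A t = φ t)
    (τ : ℝ → Ω → ℝ)
    (hτ : ∀ t : ℝ, 0 ≤ t → (t : EReal) < r → ∀ x : Ω, 0 ≤ τ t x ∧
      (∫ s in (t - τ t x)..t, f (A s) x) = ∫ s in (-(τ₀ x))..(0 : ℝ), f (φ s) x) :
    ∀ x : Ω,
      τ 0 x = τ₀ x ∧
      (∀ t : ℝ, 0 ≤ t → (t : EReal) < r →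
        HasDerivWithinAt (fun s : ℝ => τ s x)
          (1 - f (A t) x / f (A (t - τ t x)) x)
          {s : ℝ | 0 ≤ s ∧ (s : EReal) < r} t) ∧
      ContinuousOn (fun t : ℝ => 1 - f (A t) x / f (A (t - τ t x)) x)
        {s : ℝ | 0 ≤ s ∧ (s : EReal) < r} := by
  intro x
  set S := {t : ℝ | (t : EReal) < r}
  set D := {s : ℝ | 0 ≤ s ∧ (s : EReal) < r}
  have hS : IsLowerSet S := fun a b hba hb => (EReal.coe_le_coe_iff.2 hba).trans_lt hb
  have h0S : (0 : ℝ) ∈ S := by simpa [S] using hr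
  have hh : ContinuousOn (fun s => f (A s) x) S :=
    ((continuous_eval_const x).comp hf_lip.continuous).comp_continuousOn hAcont
  have hpos : ∀ s ∈ S, 0 < f (A s) x := fun s _ => (hf_bdd _ x).1
  have hσS : ∀ t ∈ D, t - τ t x ∈ S := fun t ht =>
    hS (sub_le_self _ (hτ t ht.1 ht.2 x).1) ht.2
  have hderiv : ∀ t ∈ D, HasDerivWithinAt (fun s => s - τ s x)
      (f (A t) x / f (A (t - τ t x)) x) D t := fun t =>
    hasDerivWithinAt_of_forall_integral_eq (isOpen_Iio.preimage continuous_coe_real_ereal)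
      hS.ordConnected hh hpos (fun s hs => hs.2) hσS fun s hs => (hτ s hs.1 hs.2 x).2
  refine ⟨?_, fun t ht0 htr => ?_, ?_⟩
  · have hint : ∫ s in -τ₀ x..0, f (φ s) x = ∫ s in -τ₀ x..0, f (A s) x :=
      integral_congr fun s hs => by
        rw [hA0 s (hs.2.trans (max_le (neg_nonpos.2 (hτ₀ x)) le_rfl))]
    have heq := (hτ 0 le_rfl hr x).2
    rw [hint, ← neg_inj, ← integral_symm, ← integral_symm] at heq
    have hlag := (hh.strictMonoOn_integral_of_pos hS.ordConnected hpos h0S).injOn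
      (hσS 0 ⟨le_rfl, hr⟩) (hS (neg_nonpos.2 (hτ₀ x)) h0S) heq
    linarith
  · simpa using (hasDerivWithinAt_id t D).fun_sub (hderiv t ⟨ht0, htr⟩)
  · have hσ : ContinuousOn (fun t => t - τ t x) D := fun t ht => (hderiv t ht).continuousWithinAt
    exact continuousOn_const.sub ((hh.mono fun s hs => hs.2).div (hh.comp hσ hσS)
      fun t ht => (hpos _ (hσS t ht)).ne')

/-- the unique nonnegative solution τ(t,x) of the integral equation is,
for each fixed x, continuously differentiable in t on [0,r), satisfies the ODE
∂ₜτ(t,x) = 1 − f(A(t,·))(x)/f(A(t−τ(t,x),·))(x) on [0,r), and τ(0,x) = τ₀(x). -/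
theorem stmt_3
    {n : ℕ} (hn : 1 ≤ n)
    (Ω : Set (EuclideanSpace ℝ (Fin n))) (hΩ : IsCompact Ω) [CompactSpace Ω]
    (f : C(Ω, ℝ) → C(Ω, ℝ)) (Kf : ℝ≥0) (hf_lip : LipschitzWith Kf f)
    (hf_mono : ∀ u v : C(Ω, ℝ), u ≤ v → f v ≤ f u)
    (Mbar : ℝ) (hMbar : 0 < Mbar)
    (hf_bdd : ∀ (ψ : C(Ω, ℝ)) (x : Ω), 0 < f ψ x ∧ f ψ x ≤ Mbar)
    (φ : ℝ → C(Ω, ℝ)) (hφcont : ContinuousOn φ (Set.Iic 0))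
    (τ₀ : C(Ω, ℝ)) (hτ₀ : ∀ x, 0 ≤ τ₀ x)
    (r : EReal) (hr : 0 < r)
    (A : ℝ → C(Ω, ℝ)) (hAcont : ContinuousOn A {t : ℝ | (t : EReal) < r})
    (hA0 : ∀ t ≤ (0 : ℝ), A t = φ t)
    (τ : ℝ → Ω → ℝ)
    (hτ : ∀ t : ℝ, 0 ≤ t → (t : EReal) < r → ∀ x : Ω, 0 ≤ τ t x ∧
      (∫ s in (t - τ t x)..t, f (A s) x) = ∫ s in (-(τ₀ x))..(0 : ℝ), f (φ s) x) :
    ∀ x : Ω,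
      τ 0 x = τ₀ x ∧
      (∀ t : ℝ, 0 ≤ t → (t : EReal) < r →
        HasDerivWithinAt (fun s : ℝ => τ s x)
          (1 - f (A t) x / f (A (t - τ t x)) x)
          {s : ℝ | 0 ≤ s ∧ (s : EReal) < r} t) ∧
      ContinuousOn (fun t : ℝ => 1 - f (A t) x / f (A (t - τ t x)) x)
        {s : ℝ | 0 ≤ s ∧ (s : EReal) < r} :=
  stmt_3_general Ω f Kf hf_lip Mbar hf_bdd φ τ₀ hτ₀ r hr A hAcont hA0 τ hτ
end

section
/- Let (φ,δ) ∈ BUC_α × C(Ω) be such that for every x ∈ Ω with δ(x) > 0 one has δ(x) < ∫_{−∞}^{0} f(φ(s,·))(x) ds. Define φ̄(s,x) := φ(s,x) for s ≤ 0 and φ̄(s,x) := φ(0,x) for s ≥ 0. Then there exists a unique function γ : Ω → ℝ such that ∫_{−γ(x)}^{0} f(φ̄(s,·))(x) ds = δ(x) for every x ∈ Ω; moreover γ is bounded and continuous on Ω, i.e. γ ∈ C(Ω). -/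
open scoped NNReal
open MeasureTheory intervalIntegral Set

/-!
For fixed `x`, the map `t ↦ ∫_{-t}^0 f(φ̄(s))(x) ds` is continuous and strictly increasing because
the integrand is positive. For `t ≤ 0` it equals `t · f(φ(0))(x)`, and as `t → ∞` it tends to the
improper integral `∫_{-∞}^0 f(φ(s))(x) ds`, which exceeds `δ(x)` whenever `δ(x) > 0`; so the
intermediate value theorem gives a unique root `γ(x)`. For fixed `t` the map is continuous in `x`,
being the evaluation at `x` of a `C(Ω)`-valued integral, and the root of a family of strictly
monotone functions depending continuously on a parameter depends continuously on it. Boundedness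
follows from compactness of `Ω`.
-/

theorem ContinuousMap.intervalIntegral_apply {Y E : Type*} [TopologicalSpace Y] [CompactSpace Y]
    [NormedAddCommGroup E] [NormedSpace ℝ E] [CompleteSpace E] {μ : Measure ℝ}
    {F : ℝ → C(Y, E)} {a b : ℝ} (hF : IntervalIntegrable F μ a b) (y : Y) :
    (∫ s in a..b, F s ∂μ) y = ∫ s in a..b, F s y ∂μ :=
  (ContinuousLinearMap.intervalIntegral_comp_comm (ContinuousMap.evalCLM ℝ y) hF).symm

theorem ContinuousMap.continuous_intervalIntegral_apply {Y E : Type*} [TopologicalSpace Y]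
    [CompactSpace Y] [NormedAddCommGroup E] [NormedSpace ℝ E] [CompleteSpace E]
    {μ : Measure ℝ} {F : ℝ → C(Y, E)} {a b : ℝ} (hF : IntervalIntegrable F μ a b) :
    Continuous fun y => ∫ s in a..b, F s y ∂μ :=
  (∫ s in a..b, F s ∂μ).continuous.congr (ContinuousMap.intervalIntegral_apply hF)

theorem continuous_ite_le_of_continuousOn_Iic {E : Type*} [TopologicalSpace E] {φ : ℝ → E}
    {b : ℝ} (hφ : ContinuousOn φ (Iic b)) :
    Continuous fun u => if u ≤ b then φ u else φ b := by
  have h_eq : (fun u => if u ≤ b then φ u else φ b) = fun u => φ (min u b) := by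
    funext u
    split_ifs with hu
    · rw [min_eq_left hu]
    · rw [min_eq_right (le_of_not_ge hu)]
  rw [h_eq]
  exact hφ.comp_continuous (continuous_id.min continuous_const) fun u => min_le_right u b

theorem continuous_of_strictMono_of_apply_eq_s6 {X : Type*} [TopologicalSpace X]
    {G : X → ℝ → ℝ} (hG_mono : ∀ x, StrictMono (G x))
    (hG_cont : ∀ t, Continuous fun x => G x t) {γ δ : X → ℝ} (hδ : Continuous δ)
    (hγ : ∀ x, G x (γ x) = δ x) : Continuous γ := by
  refine continuous_iff_continuousAt.2 fun x₀ => tendsto_order.2 ⟨fun a ha => ?_, fun b hb => ?_⟩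
  · have h_lt : G x₀ a < δ x₀ := hγ x₀ ▸ hG_mono x₀ ha
    filter_upwards [(isOpen_lt (hG_cont a) hδ).mem_nhds h_lt] with x hx
    exact (hG_mono x).lt_iff_lt.1 (hγ x ▸ hx)
  · have h_lt : δ x₀ < G x₀ b := hγ x₀ ▸ hG_mono x₀ hb
    filter_upwards [(isOpen_lt hδ (hG_cont b)).mem_nhds h_lt] with x hx
    exact (hG_mono x).lt_iff_lt.1 (hγ x ▸ hx)

section IntegralUpToZero

variable {h : ℝ → ℝ}

theorem continuous_intervalIntegral_neg_zero (hc : Continuous h) :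
    Continuous fun t => ∫ s in (-t)..0, h s :=
  ((continuous_primitive (fun a b => hc.intervalIntegrable a b) 0).comp
    continuous_neg).neg.congr fun t => (integral_symm 0 (-t)).symm

theorem strictMono_intervalIntegral_neg_zero (hc : Continuous h) (hpos : ∀ s, 0 < h s) :
    StrictMono fun t => ∫ s in (-t)..0, h s := by
  intro t₁ t₂ ht
  have h_split : (∫ s in (-t₂)..(-t₁), h s) + ∫ s in (-t₁)..0, h s = ∫ s in (-t₂)..0, h s :=
    integral_add_adjacent_intervals (hc.intervalIntegrable _ _) (hc.intervalIntegrable _ _)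
  have h_pos : 0 < ∫ s in (-t₂)..(-t₁), h s :=
    intervalIntegral_pos_of_pos (hc.intervalIntegrable _ _) hpos (by linarith)
  dsimp only
  linarith

theorem intervalIntegral_neg_zero_of_nonpos (hconst : ∀ s, 0 ≤ s → h s = h 0) {t : ℝ}
    (ht : t ≤ 0) : ∫ s in (-t)..0, h s = t * h 0 := by
  have h_eqOn : EqOn h (fun _ => h 0) (uIcc (-t) 0) := fun s hs =>
    hconst s (by rw [uIcc_of_ge (by linarith)] at hs; exact hs.1)
  rw [integral_congr h_eqOn, intervalIntegral.integral_const, smul_eq_mul]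
  ring

theorem exists_intervalIntegral_neg_zero_eq (hc : Continuous h) (hpos : ∀ s, 0 < h s)
    (hconst : ∀ s, 0 ≤ s → h s = h 0) {δ : ℝ} (hδ : 0 < δ → δ < ∫ s in Iic 0, h s) :
    ∃ t, ∫ s in (-t)..0, h s = δ := by
  rcases le_or_gt δ 0 with hδ_nonpos | hδ_pos
  · refine ⟨δ / h 0, ?_⟩
    rw [intervalIntegral_neg_zero_of_nonpos hconst (div_nonpos_of_nonpos_of_nonneg hδ_nonpos
      (hpos 0).le), div_mul_cancel₀ _ (hpos 0).ne']
  have hδ_lt := hδ hδ_pos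
  have h_int : IntegrableOn h (Iic 0) := by
    by_contra h_not
    rw [integral_undef h_not] at hδ_lt
    linarith
  obtain ⟨T, hT⟩ := ((intervalIntegral_tendsto_integral_Iic 0 h_int
    Filter.tendsto_neg_atTop_atBot).eventually (eventually_gt_nhds hδ_lt)).exists
  have h_mem : δ ∈ uIcc (∫ s in (-0)..0, h s) (∫ s in (-T)..0, h s) := by
    rw [neg_zero, integral_same]
    exact mem_uIcc_of_le hδ_pos.le hT.le
  obtain ⟨t, -, ht⟩ :=
    intermediate_value_uIcc (continuous_intervalIntegral_neg_zero hc).continuousOn h_mem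
  exact ⟨t, ht⟩

end IntegralUpToZero

theorem stmt_6_general
    {n : ℕ}
    (Ω : Set (EuclideanSpace ℝ (Fin n))) [CompactSpace Ω]
    (f : C(Ω, ℝ) → C(Ω, ℝ)) (Kf : ℝ≥0) (hf_lip : LipschitzWith Kf f)
    (Mbar : ℝ)
    (hf_bdd : ∀ (ψ : C(Ω, ℝ)) (x : Ω), 0 < f ψ x ∧ f ψ x ≤ Mbar)
    (φ : ℝ → C(Ω, ℝ)) (hφcont : ContinuousOn φ (Set.Iic 0))
    (δ : C(Ω, ℝ))
    (hδ : ∀ x : Ω, 0 < δ x → δ x < ∫ s in Set.Iic (0 : ℝ), f (φ s) x) :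
    (∃! γ : Ω → ℝ, ∀ x : Ω,
      (∫ s in (-(γ x))..(0 : ℝ), f ((fun u : ℝ => if u ≤ 0 then φ u else φ 0) s) x) = δ x) ∧
    (∀ γ : Ω → ℝ,
      (∀ x : Ω,
        (∫ s in (-(γ x))..(0 : ℝ), f ((fun u : ℝ => if u ≤ 0 then φ u else φ 0) s) x) = δ x) →
      (∃ C : ℝ, ∀ x : Ω, |γ x| ≤ C) ∧ Continuous γ) := by
  set F : ℝ → C(Ω, ℝ) := fun s => f (if s ≤ 0 then φ s else φ 0) with hF_def
  have hF : Continuous F := hf_lip.continuous.comp (continuous_ite_le_of_continuousOn_Iic hφcont)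
  have hF_pos (x : Ω) (s : ℝ) : 0 < F s x := (hf_bdd _ x).1
  have hF_const (x : Ω) (s : ℝ) (hs : 0 ≤ s) : F s x = F 0 x := by
    rcases hs.eq_or_lt with rfl | hs
    · rfl
    · simp only [hF_def, if_neg hs.not_ge, le_refl, if_true]
  have hF_Iic (x : Ω) : ∫ s in Iic 0, F s x = ∫ s in Iic 0, f (φ s) x :=
    setIntegral_congr_fun measurableSet_Iic fun s hs => by
      simp only [hF_def, if_pos (mem_Iic.1 hs)]
  have hcont (x : Ω) : Continuous fun s => F s x := (continuous_eval_const x).comp hF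
  have hmono (x : Ω) := strictMono_intervalIntegral_neg_zero (hcont x) (hF_pos x)
  choose γ hγ using fun x => exists_intervalIntegral_neg_zero_eq (hcont x) (hF_pos x)
    (hF_const x) (hF_Iic x ▸ hδ x)
  have hγ_cont : Continuous γ := continuous_of_strictMono_of_apply_eq_s6 hmono
    (fun t => ContinuousMap.continuous_intervalIntegral_apply (hF.intervalIntegrable _ _))
    δ.continuous hγ
  have hγ_unique (γ' : Ω → ℝ) (hγ' : ∀ x, ∫ s in (-(γ' x))..0, F s x = δ x) : γ' = γ :=
    funext fun x => (hmono x).injective ((hγ' x).trans (hγ x).symm)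
  refine ⟨⟨γ, hγ, hγ_unique⟩, fun γ' hγ' => ?_⟩
  obtain rfl := hγ_unique γ' hγ'
  obtain ⟨C, hC⟩ := isCompact_univ.exists_bound_of_continuousOn hγ_cont.continuousOn
  exact ⟨⟨C, fun x => hC x (mem_univ x)⟩, hγ_cont⟩

/-- for (φ,δ) ∈ BUC_α × C(Ω) with δ(x) < ∫_{−∞}^0 f(φ(s,·))(x) ds whenever
δ(x) > 0, there is a unique γ : Ω → ℝ with ∫_{−γ(x)}^0 f(φ̄(s,·))(x) ds = δ(x) for all x,
where φ̄ extends φ by φ(0,·) on [0,∞); moreover γ is bounded and continuous. -/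
theorem stmt_6
    {n : ℕ} (hn : 1 ≤ n)
    (Ω : Set (EuclideanSpace ℝ (Fin n))) (hΩ : IsCompact Ω) [CompactSpace Ω]
    (f : C(Ω, ℝ) → C(Ω, ℝ)) (Kf : ℝ≥0) (hf_lip : LipschitzWith Kf f)
    (hf_mono : ∀ u v : C(Ω, ℝ), u ≤ v → f v ≤ f u)
    (Mbar : ℝ) (hMbar : 0 < Mbar)
    (hf_bdd : ∀ (ψ : C(Ω, ℝ)) (x : Ω), 0 < f ψ x ∧ f ψ x ≤ Mbar)
    (α : ℝ) (hα : 0 ≤ α)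
    (φ : ℝ → C(Ω, ℝ)) (hφcont : ContinuousOn φ (Set.Iic 0))
    (hφbdd : ∃ C : ℝ, ∀ t ≤ (0 : ℝ), ‖Real.exp (-(α * |t|)) • φ t‖ ≤ C)
    (hφuc : UniformContinuousOn (fun t : ℝ => Real.exp (-(α * |t|)) • φ t) (Set.Iic 0))
    (δ : C(Ω, ℝ))
    (hδ : ∀ x : Ω, 0 < δ x → δ x < ∫ s in Set.Iic (0 : ℝ), f (φ s) x) :
    (∃! γ : Ω → ℝ, ∀ x : Ω,
      (∫ s in (-(γ x))..(0 : ℝ), f ((fun u : ℝ => if u ≤ 0 then φ u else φ 0) s) x) = δ x) ∧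
    (∀ γ : Ω → ℝ,
      (∀ x : Ω,
        (∫ s in (-(γ x))..(0 : ℝ), f ((fun u : ℝ => if u ≤ 0 then φ u else φ 0) s) x) = δ x) →
      (∃ C : ℝ, ∀ x : Ω, |γ x| ≤ C) ∧ Continuous γ) :=
  stmt_6_general Ω f Kf hf_lip Mbar hf_bdd φ hφcont δ hδ
end

section
/- Let τ(t,x) be, for each t ∈ [0,r) and x ∈ Ω, the unique nonnegative solution of ∫_{t−τ(t,x)}^{t} f(A(s,·))(x) ds = ∫_{−τ₀(x)}^{0} f(φ(s,·))(x) ds. Assume there exists M > 0 with sup_{t∈[0,r)} ‖A(t,·)‖_∞ ≤ M. Set τ₀^∞ := sup_{x∈Ω} τ₀(x), φ_max := sup_{t∈[−τ₀^∞,0]} ‖φ(t,·)‖_∞, and M₁ := max{M, φ_max}, and for a real constant c let f(c) denote f applied to the constant function with value c on Ω. Then for all t ∈ [0,r) and all x ∈ Ω one has τ_min ≤ τ(t,x) ≤ τ_max, where τ_min := inf_{x∈Ω}[τ₀(x) f(φ_max)(x)] / sup_{x∈Ω} f(−M₁)(x) and τ_max := sup_{x∈Ω}[τ₀(x) f(−φ_max)(x)]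 / inf_{x∈Ω} f(M₁)(x). -/
/-! Mass balance: the delay interval `[t - τ(t,x), t]` carries the same `f`-mass at `x` as the
initial interval `[-τ₀(x), 0]`. Since `f > 0` and the mass of `[0, t]` is nonnegative, the delay
interval cannot start below `-τ₀(x)`, so `‖A‖ ≤ M₁` along it (`A = φ` on its negative part).
As `f` is antitone, both integrands are squeezed between `f` of constant functions, giving
`τ₀(x) f(φ_max)(x) ≤ τ(t,x) f(-M₁)(x)` and `τ(t,x) f(M₁)(x) ≤ τ₀(x) f(-φ_max)(x)`; taking the
infimum and supremum over the compact set `Ω` yields the two bounds. -/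

open scoped NNReal
open MeasureTheory intervalIntegral Set

theorem le_of_intervalIntegral_eq_of_pos_s8 {g : ℝ → ℝ} {a b c d : ℝ} (hbc : b ≤ c) (hcd : c ≤ d)
    (hg : ContinuousOn g (Iic d)) (hpos : ∀ s, 0 < g s)
    (h : ∫ s in a..d, g s = ∫ s in b..c, g s) : b ≤ a := by
  by_contra! hab
  have hint : ∀ u v, u ≤ v → v ≤ d → IntervalIntegrable g volume u v := fun u v huv hvd =>
    (hg.mono fun s hs => hs.2.trans hvd).intervalIntegrable_of_Icc huv
  have hsplit : ∫ s in a..d, g s = (∫ s in a..b, g s) + (∫ s in b..c, g s) + ∫ s in c..d, g s := by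
    rw [integral_add_adjacent_intervals (hint a b hab.le (hbc.trans hcd)) (hint b c hbc hcd),
      integral_add_adjacent_intervals (hint a c (hab.le.trans hbc) hcd) (hint c d hcd le_rfl)]
  have hleft : 0 < ∫ s in a..b, g s :=
    intervalIntegral_pos_of_pos_on (hint a b hab.le (hbc.trans hcd)) (fun s _ => hpos s) hab
  have hright : 0 ≤ ∫ s in c..d, g s := integral_nonneg hcd fun s _ => (hpos s).le
  linarith

theorem intervalIntegral_mem_Icc_of_forall_mem_Icc {g : ℝ → ℝ} {a b m M : ℝ} (hab : a ≤ b)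
    (hg : IntervalIntegrable g volume a b) (h : ∀ s ∈ Icc a b, g s ∈ Icc m M) :
    ∫ s in a..b, g s ∈ Icc ((b - a) * m) ((b - a) * M) := by
  constructor
  · simpa using integral_mono_on hab intervalIntegrable_const hg fun s hs => (h s hs).1
  · simpa using integral_mono_on hab hg intervalIntegrable_const fun s hs => (h s hs).2

theorem norm_le_sSup_norm_of_continuousOn {E : Type*} [SeminormedAddCommGroup E] {φ : ℝ → E}
    {a b s : ℝ} (hφ : ContinuousOn φ (Icc a b)) (hs : s ∈ Icc a b) :
    ‖φ s‖ ≤ sSup {c : ℝ | ∃ t ∈ Icc a b, c = ‖φ t‖} := by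
  refine le_csSup ((isCompact_Icc.image_of_continuousOn hφ.norm).bddAbove.mono ?_) ⟨s, hs, rfl⟩
  rintro _ ⟨t, ht, rfl⟩
  exact ⟨t, ht, rfl⟩

namespace ContinuousMap

variable {X : Type*} [TopologicalSpace X] [CompactSpace X]

theorem mem_Icc_const_of_norm_le {u : C(X, ℝ)} {c : ℝ} (h : ‖u‖ ≤ c) :
    u ∈ Icc (const X (-c)) (const X c) :=
  ⟨fun y => (abs_le.mp ((u.norm_coe_le_norm y).trans h)).1,
    fun y => (abs_le.mp ((u.norm_coe_le_norm y).trans h)).2⟩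

theorem intervalIntegral_apply_mem_Icc_of_norm_le {f : C(X, ℝ) → C(X, ℝ)} (hf : Antitone f)
    (hfc : Continuous f) {u : ℝ → C(X, ℝ)} {a b c : ℝ} (hab : a ≤ b)
    (hu : ContinuousOn u (Icc a b)) (hc : ∀ s ∈ Icc a b, ‖u s‖ ≤ c) (x : X) :
    ∫ s in a..b, f (u s) x ∈ Icc ((b - a) * f (const X c) x) ((b - a) * f (const X (-c)) x) := by
  refine intervalIntegral_mem_Icc_of_forall_mem_Icc hab ?_ fun s hs => ?_
  · exact ((continuous_eval_const x).comp hfc).comp_continuousOn hu |>.intervalIntegrable_of_Icc hab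
  · obtain ⟨hlow, hup⟩ := mem_Icc_const_of_norm_le (hc s hs)
    exact ⟨hf hup x, hf hlow x⟩

end ContinuousMap

section CompactRange

variable {X : Type*} [TopologicalSpace X] [CompactSpace X] {p q : X → ℝ} {T : ℝ}

theorem ciInf_div_ciSup_le (hp : Continuous p) (hq : Continuous q) (hq0 : ∀ y, 0 < q y)
    (hT : 0 ≤ T) {x : X} (h : p x ≤ T * q x) : (⨅ y, p y) / (⨆ y, q y) ≤ T := by
  have hqx : q x ≤ ⨆ y, q y := le_ciSup (isCompact_range hq).bddAbove x
  rw [div_le_iff₀ ((hq0 x).trans_le hqx)]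
  calc (⨅ y, p y) ≤ p x := ciInf_le (isCompact_range hp).bddBelow x
    _ ≤ T * q x := h
    _ ≤ T * ⨆ y, q y := mul_le_mul_of_nonneg_left hqx hT

theorem le_ciSup_div_ciInf [Nonempty X] (hp : Continuous p) (hq : Continuous q)
    (hq0 : ∀ y, 0 < q y) (hT : 0 ≤ T) {x : X} (h : T * q x ≤ p x) :
    T ≤ (⨆ y, p y) / (⨅ y, q y) := by
  obtain ⟨y₀, hy₀⟩ : ⨅ y, q y ∈ range q := (isCompact_range hq).sInf_mem (range_nonempty q)
  rw [le_div_iff₀ (hy₀ ▸ hq0 y₀)]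
  calc T * ⨅ y, q y ≤ T * q x :=
        mul_le_mul_of_nonneg_left (ciInf_le (isCompact_range hq).bddBelow x) hT
    _ ≤ p x := h
    _ ≤ ⨆ y, p y := le_ciSup (isCompact_range hp).bddAbove x

end CompactRange

theorem stmt_8_general
    {n : ℕ}
    (Ω : Set (EuclideanSpace ℝ (Fin n))) [CompactSpace Ω] [Nonempty Ω]
    (f : C(Ω, ℝ) → C(Ω, ℝ)) (Kf : ℝ≥0) (hf_lip : LipschitzWith Kf f)
    (hf_mono : ∀ u v : C(Ω, ℝ), u ≤ v → f v ≤ f u)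
    (Mbar : ℝ)
    (hf_bdd : ∀ (ψ : C(Ω, ℝ)) (x : Ω), 0 < f ψ x ∧ f ψ x ≤ Mbar)
    (φ : ℝ → C(Ω, ℝ)) (hφcont : ContinuousOn φ (Set.Iic 0))
    (τ₀ : C(Ω, ℝ)) (hτ₀ : ∀ x, 0 ≤ τ₀ x)
    (r : EReal)
    (A : ℝ → C(Ω, ℝ)) (hAcont : ContinuousOn A {t : ℝ | (t : EReal) < r})
    (hA0 : ∀ t ≤ (0 : ℝ), A t = φ t)
    (τ : ℝ → Ω → ℝ)
    (hτ : ∀ t : ℝ, 0 ≤ t → (t : EReal) < r → ∀ x : Ω, 0 ≤ τ t x ∧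
      (∫ s in (t - τ t x)..t, f (A s) x) = ∫ s in (-(τ₀ x))..(0 : ℝ), f (φ s) x)
    (M : ℝ)
    (hAbdd : ∀ t : ℝ, 0 ≤ t → (t : EReal) < r → ‖A t‖ ≤ M) :
    let τ₀inf : ℝ := ⨆ x : Ω, τ₀ x
    let φmax : ℝ := sSup {c : ℝ | ∃ t ∈ Set.Icc (-τ₀inf) (0 : ℝ), c = ‖φ t‖}
    let M₁ : ℝ := max M φmax
    let τmin : ℝ := (⨅ x : Ω, τ₀ x * f (ContinuousMap.const Ω φmax) x) /
      (⨆ x : Ω, f (ContinuousMap.const Ω (-M₁)) x)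
    let τmax : ℝ := (⨆ x : Ω, τ₀ x * f (ContinuousMap.const Ω (-φmax)) x) /
      (⨅ x : Ω, f (ContinuousMap.const Ω M₁) x)
    ∀ t : ℝ, 0 ≤ t → (t : EReal) < r → ∀ x : Ω,
      τmin ≤ τ t x ∧ τ t x ≤ τmax := by
  intro τ₀inf φmax M₁ τmin τmax t ht htr x
  obtain ⟨hτ_nonneg, hτ_eq⟩ := hτ t ht htr x
  have hτ₀_le (y : Ω) : τ₀ y ≤ τ₀inf := le_ciSup (isCompact_range τ₀.continuous).bddAbove y
  have hφ_le : ∀ s ∈ Icc (-τ₀ x) 0, ‖φ s‖ ≤ φmax := fun s hs =>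
    norm_le_sSup_norm_of_continuousOn (hφcont.mono Icc_subset_Iic_self)
      ⟨(neg_le_neg (hτ₀_le x)).trans hs.1, hs.2⟩
  have hA_cont : ContinuousOn A (Iic t) :=
    hAcont.mono fun s hs => (EReal.coe_le_coe_iff.2 hs).trans_lt htr
  have hstart : -τ₀ x ≤ t - τ t x := by
    refine le_of_intervalIntegral_eq_of_pos_s8 (neg_nonpos.2 (hτ₀ x)) ht
      (((continuous_eval_const x).comp hf_lip.continuous).comp_continuousOn hA_cont)
      (fun s => (hf_bdd _ x).1) (hτ_eq.trans (integral_congr fun s hs => ?_))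
    rw [uIcc_of_le (neg_nonpos.2 (hτ₀ x))] at hs
    show f (φ s) x = f (A s) x
    rw [hA0 s hs.2]
  have hA_le : ∀ s ∈ Icc (t - τ t x) t, ‖A s‖ ≤ M₁ := by
    intro s hs
    rcases le_or_gt 0 s with hs0 | hs0
    · exact (hAbdd s hs0 ((EReal.coe_le_coe_iff.2 hs.2).trans_lt htr)).trans (le_max_left _ _)
    · rw [hA0 s hs0.le]
      exact (hφ_le s ⟨hstart.trans hs.1, hs0.le⟩).trans (le_max_right _ _)
  have hA_int := ContinuousMap.intervalIntegral_apply_mem_Icc_of_norm_le hf_mono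
    hf_lip.continuous (sub_le_self _ hτ_nonneg) (hA_cont.mono fun s hs => hs.2) hA_le x
  have hφ_int := ContinuousMap.intervalIntegral_apply_mem_Icc_of_norm_le hf_mono
    hf_lip.continuous (neg_nonpos.2 (hτ₀ x)) (hφcont.mono fun s hs => hs.2) hφ_le x
  rw [sub_sub_cancel, hτ_eq] at hA_int
  rw [sub_neg_eq_add, zero_add] at hφ_int
  exact ⟨ciInf_div_ciSup_le (τ₀.continuous.mul (f _).continuous) (f _).continuous
      (fun y => (hf_bdd _ y).1) hτ_nonneg (hφ_int.1.trans hA_int.2),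
    le_ciSup_div_ciInf (τ₀.continuous.mul (f _).continuous) (f _).continuous
      (fun y => (hf_bdd _ y).1) hτ_nonneg (hA_int.1.trans hφ_int.2)⟩

/-- a priori bounds for the delay: if ‖A(t,·)‖_∞ ≤ M on [0,r) then
τ_min ≤ τ(t,x) ≤ τ_max, with τ_min = inf_x[τ₀(x)f(φ_max)(x)]/sup_x f(−M₁)(x) and
τ_max = sup_x[τ₀(x)f(−φ_max)(x)]/inf_x f(M₁)(x), where M₁ = max{M,φ_max},
φ_max = sup_{t∈[−τ₀^∞,0]}‖φ(t,·)‖_∞ and τ₀^∞ = sup_x τ₀(x). -/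
theorem stmt_8
    {n : ℕ} (hn : 1 ≤ n)
    (Ω : Set (EuclideanSpace ℝ (Fin n))) (hΩ : IsCompact Ω) [CompactSpace Ω] [Nonempty Ω]
    (f : C(Ω, ℝ) → C(Ω, ℝ)) (Kf : ℝ≥0) (hf_lip : LipschitzWith Kf f)
    (hf_mono : ∀ u v : C(Ω, ℝ), u ≤ v → f v ≤ f u)
    (Mbar : ℝ) (hMbar : 0 < Mbar)
    (hf_bdd : ∀ (ψ : C(Ω, ℝ)) (x : Ω), 0 < f ψ x ∧ f ψ x ≤ Mbar)
    (φ : ℝ → C(Ω, ℝ)) (hφcont : ContinuousOn φ (Set.Iic 0))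
    (τ₀ : C(Ω, ℝ)) (hτ₀ : ∀ x, 0 ≤ τ₀ x)
    (r : EReal) (hr : 0 < r)
    (A : ℝ → C(Ω, ℝ)) (hAcont : ContinuousOn A {t : ℝ | (t : EReal) < r})
    (hA0 : ∀ t ≤ (0 : ℝ), A t = φ t)
    (τ : ℝ → Ω → ℝ)
    (hτ : ∀ t : ℝ, 0 ≤ t → (t : EReal) < r → ∀ x : Ω, 0 ≤ τ t x ∧
      (∫ s in (t - τ t x)..t, f (A s) x) = ∫ s in (-(τ₀ x))..(0 : ℝ), f (φ s) x)
    (M : ℝ) (hM : 0 < M)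
    (hAbdd : ∀ t : ℝ, 0 ≤ t → (t : EReal) < r → ‖A t‖ ≤ M) :
    let τ₀inf : ℝ := ⨆ x : Ω, τ₀ x
    let φmax : ℝ := sSup {c : ℝ | ∃ t ∈ Set.Icc (-τ₀inf) (0 : ℝ), c = ‖φ t‖}
    let M₁ : ℝ := max M φmax
    let τmin : ℝ := (⨅ x : Ω, τ₀ x * f (ContinuousMap.const Ω φmax) x) /
      (⨆ x : Ω, f (ContinuousMap.const Ω (-M₁)) x)
    let τmax : ℝ := (⨆ x : Ω, τ₀ x * f (ContinuousMap.const Ω (-φmax)) x) /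
      (⨅ x : Ω, f (ContinuousMap.const Ω M₁) x)
    ∀ t : ℝ, 0 ≤ t → (t : EReal) < r → ∀ x : Ω,
      τmin ≤ τ t x ∧ τ t x ≤ τmax :=
  stmt_8_general Ω f Kf hf_lip hf_mono Mbar hf_bdd φ hφcont τ₀ hτ₀ r A hAcont hA0 τ hτ M hAbdd
end

section
/- Let M₀ > 0, let φ, φ̃ ∈ Lip_α and τ₀, τ̃₀ ∈ C_+(Ω) satisfy ‖φ‖_{Lip_α} + ‖τ₀‖_∞ ≤ M₀ and ‖φ̃‖_{Lip_α} + ‖τ̃₀‖_∞ ≤ M₀. Let r ∈ (0,+∞] and let A, Ã ∈ C((−∞,r),C(Ω)) satisfy A(t,·) = φ(t,·) and Ã(t,·) = φ̃(t,·) for t ≤ 0, and assume M := max{sup_{t∈[0,r)}‖A(t,·)‖_∞, sup_{t∈[0,r)}‖Ã(t,·)‖_∞} < +∞. Define δ₀(x) := ∫_{−τ₀(x)}^{0} f(φ(s,·))(x) ds and δ̃₀(x) := ∫_{−τ̃₀(x)}^{0} f(φ̃(s,·))(x) ds, and let τ(t,x) and τ̃(t,x) be the unique nonnegative solutions of ∫_{t−τ(t,x)}^{t}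 f(A(s,·))(x) ds = δ₀(x) and ∫_{t−τ̃(t,x)}^{t} f(Ã(s,·))(x) ds = δ̃₀(x). Then there exists a constant L_τ > 0 such that for all t ∈ [0,r) and all x ∈ Ω, |τ(t,x) − τ̃(t,x)| ≤ L_τ [ sup_{s∈[−τ̄₀^∞,r)} ‖A(s,·) − Ã(s,·)‖_∞ + ‖δ₀ − δ̃₀‖_∞ ], where τ̄₀^∞ := max{sup_{x∈Ω} τ₀(x), sup_{x∈Ω} τ̃₀(x)}. -/
open scoped NNReal
open MeasureTheory intervalIntegral Set

/-- The weighted history `φ_α(t) = e^{−α|t|} φ(t)`. -/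
noncomputable def weightedHist {Ω : Type*} [TopologicalSpace Ω]
    (α : ℝ) (φ : ℝ → C(Ω, ℝ)) : ℝ → C(Ω, ℝ) :=
  fun t => Real.exp (-(α * |t|)) • φ t

/-- Membership in `Lip_α`: `φ_α` is bounded and Lipschitz from `(−∞,0]` to `C(Ω)`. -/
def MemLipAlpha {Ω : Type*} [TopologicalSpace Ω] [CompactSpace Ω]
    (α : ℝ) (φ : ℝ → C(Ω, ℝ)) : Prop :=
  ContinuousOn φ (Set.Iic 0) ∧
  (∃ C : ℝ, ∀ t ≤ (0 : ℝ), ‖weightedHist α φ t‖ ≤ C) ∧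
  (∃ L : ℝ≥0, LipschitzOnWith L (weightedHist α φ) (Set.Iic 0))

/-- The norm of `Lip_α`: `‖φ_α‖_∞ + ‖φ_α‖_{Lip}`. -/
noncomputable def lipAlphaNorm {Ω : Type*} [TopologicalSpace Ω] [CompactSpace Ω]
    (α : ℝ) (φ : ℝ → C(Ω, ℝ)) : ℝ :=
  sSup {c : ℝ | ∃ t ≤ (0 : ℝ), c = ‖weightedHist α φ t‖} +
  sSup {c : ℝ | ∃ t ≤ (0 : ℝ), ∃ s ≤ (0 : ℝ), t ≠ s ∧
    c = ‖weightedHist α φ t - weightedHist α φ s‖ / |t - s|}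

/-! Both histories are bounded on the window `[-τ̄₀, r)` (by compactness on `[-τ̄₀, 0]`, by `M`
on `[0, r)`), so, `f` being antitone and positive, it stays above some `m > 0` along them there.
Since `f > 0`, the delay equation forces `-τ₀(x) ≤ t - τ(t,x)`, and comparing with `m` gives
`τ(t,x) ≤ M̄ τ̄₀ / m + τ̄₀`. If `τ̃ ≤ τ`, then
`m (τ - τ̃) ≤ ∫_{t-τ}^{t-τ̃} f(A) = δ₀ - δ̃₀ + ∫_{t-τ̃}^t (f(Ã) - f(A))`,
and the last integral is at most `K_f τ̃ sup ‖A - Ã‖` because `f` is Lipschitz. -/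

lemma mul_sub_le_integral_of_le {g : ℝ → ℝ} {u v m : ℝ} (huv : u ≤ v)
    (hg : IntervalIntegrable g volume u v) (hm : ∀ s ∈ Icc u v, m ≤ g s) :
    m * (v - u) ≤ ∫ s in u..v, g s := by
  simpa [mul_comm] using integral_mono_on huv intervalIntegrable_const hg hm

lemma neg_le_sub_of_integral_eq {g : ℝ → ℝ} {t a c : ℝ} (ht : 0 ≤ t) (hc : 0 ≤ c)
    (hg : ContinuousOn g (Iic t)) (hpos : ∀ s ≤ t, 0 < g s)
    (h : ∫ s in (t - a)..t, g s = ∫ s in (-c)..0, g s) : -c ≤ t - a := by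
  by_contra! hlt
  have hint (u v : ℝ) (hu : u ≤ t) (hv : v ≤ t) : IntervalIntegrable g volume u v :=
    (hg.mono fun _ hs => hs.2.trans (max_le hu hv)).intervalIntegrable
  have hfirst : 0 < ∫ s in (t - a)..(-c), g s :=
    intervalIntegral_pos_of_pos_on (hint _ _ (by linarith) (by linarith))
      (fun s hs => hpos s (by linarith [hs.2])) hlt
  have hlast : 0 ≤ ∫ s in (0 : ℝ)..t, g s := integral_nonneg ht fun s hs => (hpos s hs.2).le
  have h₁ := integral_add_adjacent_intervals (hint (t - a) (-c) (by linarith) (by linarith))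
    (hint (-c) 0 (by linarith) ht)
  have h₂ := integral_add_adjacent_intervals (hint (t - a) 0 (by linarith) ht)
    (hint 0 t ht le_rfl)
  linarith

lemma mul_sub_le_integral_of_neg_le {g : ℝ → ℝ} {t a c m : ℝ} (ht : 0 ≤ t) (ha : 0 ≤ a)
    (hc : 0 ≤ c) (hm0 : 0 ≤ m) (hca : -c ≤ t - a) (hg : ContinuousOn g (Icc (t - a) t))
    (hnonneg : ∀ s ∈ Icc (t - a) t, 0 ≤ g s) (hm : ∀ s ∈ Icc 0 t, m ≤ g s) :
    m * (a - c) ≤ ∫ s in (t - a)..t, g s := by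
  -- `m ≤ g` is only known on `[0, t]`: compare on `[t - min a t, t]` and use `a - c ≤ min a t`
  obtain ⟨b, hb0, hba, hbt, hb⟩ : ∃ b, 0 ≤ b ∧ b ≤ a ∧ b ≤ t ∧ a - c ≤ b :=
    ⟨min a t, le_min ha ht, min_le_left a t, min_le_right a t,
      le_min (by linarith) (by linarith)⟩
  have hint (u v : ℝ) (hu : t - a ≤ u) (hv : v ≤ t) (huv : u ≤ v) :
      IntervalIntegrable g volume u v :=
    (hg.mono (by rw [uIcc_of_le huv]; exact Icc_subset_Icc hu hv)).intervalIntegrable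
  have hmb : m * b ≤ ∫ s in (t - b)..t, g s := by
    simpa using mul_sub_le_integral_of_le (by linarith)
      (hint (t - b) t (by linarith) le_rfl (by linarith))
      fun s hs => hm s ⟨by linarith [hs.1], hs.2⟩
  have hrest : 0 ≤ ∫ s in (t - a)..(t - b), g s :=
    integral_nonneg (by linarith) fun s hs => hnonneg s ⟨hs.1, by linarith [hs.2]⟩
  have hsplit := integral_add_adjacent_intervals
    (hint (t - a) (t - b) le_rfl (by linarith) (by linarith))
    (hint (t - b) t (by linarith) le_rfl (by linarith))
  calc m * (a - c) ≤ m * b := mul_le_mul_of_nonneg_left hb hm0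
    _ ≤ ∫ s in (t - a)..t, g s := by linarith

lemma mul_sub_le_integral_sub_integral {g g' : ℝ → ℝ} {t u a b m ε : ℝ} (hua : u ≤ t - a)
    (hb : 0 ≤ b) (hba : b ≤ a) (hg : ContinuousOn g (Icc u t)) (hg' : ContinuousOn g' (Icc u t))
    (hm : ∀ s ∈ Icc u t, m ≤ g s) (hε : ∀ s ∈ Icc u t, |g s - g' s| ≤ ε) :
    m * (a - b) ≤ (∫ s in (t - a)..t, g s) - (∫ s in (t - b)..t, g' s) + ε * b := by
  have hint {h : ℝ → ℝ} (hh : ContinuousOn h (Icc u t)) (v w : ℝ) (hv : u ≤ v) (hw : w ≤ t)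
      (hvw : v ≤ w) : IntervalIntegrable h volume v w :=
    (hh.mono (by rw [uIcc_of_le hvw]; exact Icc_subset_Icc hv hw)).intervalIntegrable
  have hgap : m * (a - b) ≤ ∫ s in (t - a)..(t - b), g s := by
    simpa using mul_sub_le_integral_of_le (by linarith)
      (hint hg (t - a) (t - b) hua (by linarith) (by linarith))
      fun s hs => hm s ⟨by linarith [hs.1], by linarith [hs.2]⟩
  have hsplit := integral_add_adjacent_intervals
    (hint hg (t - a) (t - b) hua (by linarith) (by linarith))
    (hint hg (t - b) t (by linarith) le_rfl (by linarith))
  have hclose : |∫ s in (t - b)..t, (g s - g' s)| ≤ ε * b := by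
    simpa [abs_of_nonneg hb] using norm_integral_le_of_norm_le_const (a := t - b) (b := t)
      (f := fun s => g s - g' s) fun s hs => (Real.norm_eq_abs _).trans_le <| hε s
        (Ioc_subset_Icc_self (by
          rw [uIoc_of_le (by linarith)] at hs
          exact ⟨by linarith [hs.1], hs.2⟩))
  rw [integral_sub (hint hg (t - b) t (by linarith) le_rfl (by linarith))
    (hint hg' (t - b) t (by linarith) le_rfl (by linarith))] at hclose
  linarith [neg_abs_le ((∫ s in (t - b)..t, g s) - ∫ s in (t - b)..t, g' s)]

lemma mul_abs_sub_le_abs_integral_sub_integral {g g' : ℝ → ℝ} {t u a b m ε : ℝ}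
    (hua : u ≤ t - a) (hub : u ≤ t - b) (ha : 0 ≤ a) (hb : 0 ≤ b)
    (hg : ContinuousOn g (Icc u t)) (hg' : ContinuousOn g' (Icc u t))
    (hm : ∀ s ∈ Icc u t, m ≤ g s ∧ m ≤ g' s) (hε : ∀ s ∈ Icc u t, |g s - g' s| ≤ ε) :
    m * |a - b| ≤ |(∫ s in (t - a)..t, g s) - ∫ s in (t - b)..t, g' s| + ε * min a b := by
  rcases le_total b a with hba | hab
  · rw [abs_of_nonneg (sub_nonneg.2 hba), min_eq_right hba]
    linarith [mul_sub_le_integral_sub_integral hua hb hba hg hg' (fun s hs => (hm s hs).1) hε,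
      le_abs_self ((∫ s in (t - a)..t, g s) - ∫ s in (t - b)..t, g' s)]
  · rw [abs_sub_comm a, abs_of_nonneg (sub_nonneg.2 hab), min_eq_left hab, abs_sub_comm]
    linarith [mul_sub_le_integral_sub_integral hub ha hab hg' hg (fun s hs => (hm s hs).2)
      (fun s hs => abs_sub_comm (g s) (g' s) ▸ hε s hs),
      le_abs_self ((∫ s in (t - b)..t, g' s) - ∫ s in (t - a)..t, g s)]

lemma exists_forall_norm_le_of_continuousOn {E : Type*} [SeminormedAddCommGroup E] {r : EReal}
    {A : ℝ → E} (hA : ContinuousOn A {t : ℝ | (t : EReal) < r}) (hr : 0 < r) {M : ℝ}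
    (hM : ∀ t : ℝ, 0 ≤ t → (t : EReal) < r → ‖A t‖ ≤ M) (u : ℝ) :
    ∃ K, ∀ s : ℝ, u ≤ s → (s : EReal) < r → ‖A s‖ ≤ K := by
  obtain ⟨C, hC⟩ := isCompact_Icc.exists_bound_of_continuousOn (hA.mono fun s (hs : s ∈ Icc u 0) =>
    (EReal.coe_le_coe_iff.2 hs.2).trans_lt (by simpa using hr))
  refine ⟨max C M, fun s hus hsr => ?_⟩
  rcases le_total s 0 with hs | hs
  · exact (hC s ⟨hus, hs⟩).trans (le_max_left C M)
  · exact (hM s hs hsr).trans (le_max_right C M)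

lemma abs_sub_le_ciSup_abs_sub {ι : Type*} {u v : ι → ℝ} {C : ℝ} (hu : ∀ i, |u i| ≤ C)
    (hv : ∀ i, |v i| ≤ C) (i : ι) : |u i - v i| ≤ ⨆ j, |u j - v j| :=
  le_ciSup ⟨C + C, by rintro _ ⟨j, rfl⟩; exact (abs_sub _ _).trans (add_le_add (hu j) (hv j))⟩ i

section ContinuousMap

variable {X : Type*} [TopologicalSpace X] {f : C(X, ℝ) → C(X, ℝ)}

lemma exists_pos_forall_le_apply_of_norm_le [CompactSpace X] [Nonempty X] (hf : Antitone f)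
    (hpos : ∀ ψ x, 0 < f ψ x) (K : ℝ) :
    ∃ m > 0, ∀ ψ : C(X, ℝ), ‖ψ‖ ≤ K → ∀ x, m ≤ f ψ x := by
  obtain ⟨x₀, -, hx₀⟩ := isCompact_univ.exists_isMinOn univ_nonempty
    (f (ContinuousMap.const X K)).continuous.continuousOn
  refine ⟨_, hpos _ x₀, fun ψ hψ x => (isMinOn_iff.1 hx₀ x (mem_univ x)).trans ?_⟩
  exact hf (fun y => (le_abs_self _).trans ((ψ.norm_coe_le_norm y).trans hψ)) x

lemma exists_pos_forall_le_apply_of_continuousOn [CompactSpace X] [Nonempty X] (hf : Antitone f)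
    (hpos : ∀ ψ x, 0 < f ψ x) {r : EReal} (hr : 0 < r) {A At : ℝ → C(X, ℝ)}
    (hA : ContinuousOn A {t : ℝ | (t : EReal) < r})
    (hAt : ContinuousOn At {t : ℝ | (t : EReal) < r}) {M : ℝ}
    (hM : ∀ t : ℝ, 0 ≤ t → (t : EReal) < r → ‖A t‖ ≤ M ∧ ‖At t‖ ≤ M) (u : ℝ) :
    ∃ m > 0, ∀ s : ℝ, u ≤ s → (s : EReal) < r → ∀ x, m ≤ f (A s) x ∧ m ≤ f (At s) x := by
  obtain ⟨K₁, hK₁⟩ := exists_forall_norm_le_of_continuousOn hA hr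
    (fun t ht htr => (hM t ht htr).1) u
  obtain ⟨K₂, hK₂⟩ := exists_forall_norm_le_of_continuousOn hAt hr
    (fun t ht htr => (hM t ht htr).2) u
  obtain ⟨m, hm, hmK⟩ := exists_pos_forall_le_apply_of_norm_le hf hpos (max K₁ K₂)
  exact ⟨m, hm, fun s hs hsr x => ⟨hmK _ ((hK₁ s hs hsr).trans (le_max_left _ _)) x,
    hmK _ ((hK₂ s hs hsr).trans (le_max_right _ _)) x⟩⟩

lemma abs_integral_apply_le {Mbar : ℝ} (hf : ∀ ψ x, 0 < f ψ x ∧ f ψ x ≤ Mbar)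
    (φ : ℝ → C(X, ℝ)) {c C : ℝ} (hc : 0 ≤ c) (hcC : c ≤ C) (x : X) :
    |∫ s in (-c)..0, f (φ s) x| ≤ Mbar * C := by
  have hMbar : 0 ≤ Mbar := (hf (φ 0) x).1.le.trans (hf (φ 0) x).2
  calc |∫ s in (-c)..0, f (φ s) x| ≤ Mbar * c := by
        simpa [abs_of_nonneg hc] using norm_integral_le_of_norm_le_const (a := -c) (b := 0)
          (f := fun s => f (φ s) x) fun s _ => (Real.norm_eq_abs _).trans_le
            (abs_le.2 ⟨by linarith [hf (φ s) x], (hf (φ s) x).2⟩)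
    _ ≤ Mbar * C := mul_le_mul_of_nonneg_left hcC hMbar

lemma neg_le_sub_and_le_div_add_of_integral_eq (hf : Continuous f) {Mbar : ℝ}
    (hf_bdd : ∀ ψ x, 0 < f ψ x ∧ f ψ x ≤ Mbar) {r : EReal} {A φ : ℝ → C(X, ℝ)}
    (hA : ContinuousOn A {t : ℝ | (t : EReal) < r}) (hAφ : ∀ t ≤ (0 : ℝ), A t = φ t)
    {τ₀ δ₀ : X → ℝ} {c : ℝ} (hτ₀ : ∀ x, 0 ≤ τ₀ x) (hτ₀c : ∀ x, τ₀ x ≤ c)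
    (hδ₀ : ∀ x, δ₀ x = ∫ s in (-(τ₀ x))..0, f (φ s) x) {τ : ℝ → X → ℝ}
    (hτ : ∀ t : ℝ, 0 ≤ t → (t : EReal) < r → ∀ x, 0 ≤ τ t x ∧
      (∫ s in (t - τ t x)..t, f (A s) x) = δ₀ x)
    {m : ℝ} (hm : 0 < m) (hmA : ∀ s : ℝ, 0 ≤ s → (s : EReal) < r → ∀ x, m ≤ f (A s) x)
    (t : ℝ) (ht : 0 ≤ t) (htr : (t : EReal) < r) (x : X) :
    -c ≤ t - τ t x ∧ τ t x ≤ Mbar * c / m + c := by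
  have hg : ContinuousOn (fun s => f (A s) x) (Iic t) :=
    ((continuous_eval_const x).comp_continuousOn (hf.comp_continuousOn hA)).mono
      fun s hs => (EReal.coe_le_coe_iff.2 hs).trans_lt htr
  have hφA : δ₀ x = ∫ s in (-(τ₀ x))..0, f (A s) x :=
    (hδ₀ x).trans <| integral_congr fun s hs => by
      rw [uIcc_of_le (by linarith [hτ₀ x])] at hs
      simp only [hAφ s hs.2]
  obtain ⟨ha, heq⟩ := hτ t ht htr x
  have hlow := neg_le_sub_of_integral_eq ht (hτ₀ x) hg (fun s _ => (hf_bdd _ x).1)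
    (heq.trans hφA)
  have hmul := mul_sub_le_integral_of_neg_le ht ha (hτ₀ x) hm.le hlow
    (hg.mono Icc_subset_Iic_self) (fun s _ => (hf_bdd _ x).1.le)
    fun s hs => hmA s hs.1 ((EReal.coe_le_coe_iff.2 hs.2).trans_lt htr) x
  have hδ := (abs_le.1 (hδ₀ x ▸ abs_integral_apply_le hf_bdd φ (hτ₀ x) (hτ₀c x) x)).2
  have : τ t x - τ₀ x ≤ Mbar * c / m := by rw [le_div_iff₀ hm]; linarith
  constructor <;> linarith [hτ₀c x]

lemma abs_sub_le_of_lipschitzWith [CompactSpace X] {Kf : ℝ≥0} (hf : LipschitzWith Kf f)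
    {A At : ℝ → C(X, ℝ)} {t u a b m S B D : ℝ} {x : X} (hua : u ≤ t - a) (hub : u ≤ t - b)
    (ha : 0 ≤ a) (hb : 0 ≤ b) (hA : ContinuousOn A (Icc u t)) (hAt : ContinuousOn At (Icc u t))
    (hm : 0 < m) (hmA : ∀ s ∈ Icc u t, m ≤ f (A s) x ∧ m ≤ f (At s) x)
    (hS : ∀ s ∈ Icc u t, ‖A s - At s‖ ≤ S) (haB : a ≤ B)
    (hD : |(∫ s in (t - a)..t, f (A s) x) - ∫ s in (t - b)..t, f (At s) x| ≤ D) :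
    |a - b| ≤ (1 + Kf * B) / m * (S + D) := by
  have hcont {ψ : ℝ → C(X, ℝ)} (hψ : ContinuousOn ψ (Icc u t)) :
      ContinuousOn (fun s => f (ψ s) x) (Icc u t) :=
    (continuous_eval_const x).comp_continuousOn (hf.continuous.comp_continuousOn hψ)
  have hmain := mul_abs_sub_le_abs_integral_sub_integral hua hub ha hb (hcont hA) (hcont hAt) hmA
    fun s hs => calc |f (A s) x - f (At s) x| ≤ dist (f (A s)) (f (At s)) :=
          (Real.dist_eq _ _).symm.trans_le (ContinuousMap.dist_apply_le_dist x)
      _ ≤ Kf * dist (A s) (At s) := hf.dist_le_mul _ _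
      _ ≤ Kf * S := by rw [dist_eq_norm]; gcongr; exact hS s hs
  have hS0 : 0 ≤ S := (norm_nonneg _).trans (hS t ⟨by linarith, le_rfl⟩)
  have hmin : Kf * S * min a b ≤ Kf * S * B :=
    mul_le_mul_of_nonneg_left ((min_le_left _ _).trans haB) (by positivity)
  rw [div_mul_eq_mul_div, le_div_iff₀ hm]
  nlinarith [mul_nonneg (mul_nonneg Kf.coe_nonneg (ha.trans haB)) ((abs_nonneg _).trans hD)]

end ContinuousMap

theorem stmt_9_general
    {n : ℕ}
    (Ω : Set (EuclideanSpace ℝ (Fin n))) [CompactSpace Ω] [Nonempty Ω]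
    (f : C(Ω, ℝ) → C(Ω, ℝ)) (Kf : ℝ≥0) (hf_lip : LipschitzWith Kf f)
    (hf_mono : ∀ u v : C(Ω, ℝ), u ≤ v → f v ≤ f u)
    (Mbar : ℝ) (hMbar : 0 < Mbar)
    (hf_bdd : ∀ (ψ : C(Ω, ℝ)) (x : Ω), 0 < f ψ x ∧ f ψ x ≤ Mbar)
    (φ φt : ℝ → C(Ω, ℝ))
    (τ₀ τ₀t : C(Ω, ℝ)) (hτ₀ : ∀ x, 0 ≤ τ₀ x) (hτ₀t : ∀ x, 0 ≤ τ₀t x)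
    (r : EReal) (hr : 0 < r)
    (A At : ℝ → C(Ω, ℝ))
    (hAcont : ContinuousOn A {t : ℝ | (t : EReal) < r})
    (hAtcont : ContinuousOn At {t : ℝ | (t : EReal) < r})
    (hA0 : ∀ t ≤ (0 : ℝ), A t = φ t) (hAt0 : ∀ t ≤ (0 : ℝ), At t = φt t)
    (M : ℝ)
    (hAbdd : ∀ t : ℝ, 0 ≤ t → (t : EReal) < r → ‖A t‖ ≤ M ∧ ‖At t‖ ≤ M)
    (δ₀ δ₀t : Ω → ℝ)
    (hδ₀ : ∀ x : Ω, δ₀ x = ∫ s in (-(τ₀ x))..(0 : ℝ), f (φ s) x)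
    (hδ₀t : ∀ x : Ω, δ₀t x = ∫ s in (-(τ₀t x))..(0 : ℝ), f (φt s) x)
    (τ τt : ℝ → Ω → ℝ)
    (hτ : ∀ t : ℝ, 0 ≤ t → (t : EReal) < r → ∀ x : Ω, 0 ≤ τ t x ∧
      (∫ s in (t - τ t x)..t, f (A s) x) = δ₀ x)
    (hτt : ∀ t : ℝ, 0 ≤ t → (t : EReal) < r → ∀ x : Ω, 0 ≤ τt t x ∧
      (∫ s in (t - τt t x)..t, f (At s) x) = δ₀t x) :
    ∃ Lτ : ℝ, 0 < Lτ ∧ ∀ t : ℝ, 0 ≤ t → (t : EReal) < r → ∀ x : Ω,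
      |τ t x - τt t x| ≤
        Lτ * (sSup {c : ℝ | ∃ s : ℝ, -(max (⨆ y : Ω, τ₀ y) (⨆ y : Ω, τ₀t y)) ≤ s ∧
                (s : EReal) < r ∧ c = ‖A s - At s‖} +
              ⨆ y : Ω, |δ₀ y - δ₀t y|) := by
  set τb := max (⨆ y : Ω, τ₀ y) (⨆ y : Ω, τ₀t y)
  have hτ₀le (x : Ω) : τ₀ x ≤ τb :=
    (le_ciSup (isCompact_range τ₀.continuous).bddAbove x).trans (le_max_left _ _)
  have hτ₀tle (x : Ω) : τ₀t x ≤ τb :=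
    (le_ciSup (isCompact_range τ₀t.continuous).bddAbove x).trans (le_max_right _ _)
  have hτb : 0 ≤ τb := (Real.iSup_nonneg hτ₀).trans (le_max_left _ _)
  obtain ⟨m, hm, hmA⟩ := exists_pos_forall_le_apply_of_continuousOn hf_mono
    (fun ψ x => (hf_bdd ψ x).1) hr hAcont hAtcont hAbdd (-τb)
  set B := Mbar * τb / m + τb
  have hτB := neg_le_sub_and_le_div_add_of_integral_eq hf_lip.continuous hf_bdd hAcont hA0 hτ₀
    hτ₀le hδ₀ hτ hm fun s hs hsr x => (hmA s (by linarith) hsr x).1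
  have hτtB := neg_le_sub_and_le_div_add_of_integral_eq hf_lip.continuous hf_bdd hAtcont hAt0
    hτ₀t hτ₀tle hδ₀t hτt hm fun s hs hsr x => (hmA s (by linarith) hsr x).2
  set S := sSup {c : ℝ | ∃ s : ℝ, -τb ≤ s ∧ (s : EReal) < r ∧ c = ‖A s - At s‖}
  have hS {s : ℝ} (hs : -τb ≤ s) (hsr : (s : EReal) < r) : ‖A s - At s‖ ≤ S := by
    obtain ⟨K, hK⟩ := exists_forall_norm_le_of_continuousOn (hAcont.sub hAtcont) hr
      (fun t ht htr => norm_sub_le_of_le (hAbdd t ht htr).1 (hAbdd t ht htr).2) (-τb)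
    exact le_csSup ⟨K, by rintro _ ⟨s, hs, hsr, rfl⟩; exact hK s hs hsr⟩ ⟨s, hs, hsr, rfl⟩
  have hD := abs_sub_le_ciSup_abs_sub
    (fun y => hδ₀ y ▸ abs_integral_apply_le hf_bdd φ (hτ₀ y) (hτ₀le y) y)
    (fun y => hδ₀t y ▸ abs_integral_apply_le hf_bdd φt (hτ₀t y) (hτ₀tle y) y)
  refine ⟨(1 + Kf * B) / m, div_pos (by positivity) hm, fun t ht htr x => ?_⟩
  have hwindow : Icc (-τb) t ⊆ {s : ℝ | (s : EReal) < r} := fun s hs =>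
    (EReal.coe_le_coe_iff.2 hs.2).trans_lt htr
  refine abs_sub_le_of_lipschitzWith hf_lip (hτB t ht htr x).1 (hτtB t ht htr x).1
    (hτ t ht htr x).1 (hτt t ht htr x).1 (hAcont.mono hwindow) (hAtcont.mono hwindow) hm
    (fun s hs => hmA s hs.1 (hwindow hs) x) (fun s hs => hS hs.1 (hwindow hs))
    (hτB t ht htr x).2 ?_
  rw [(hτ t ht htr x).2, (hτt t ht htr x).2]
  exact hD x

/-- Lipschitz-type estimate for the state-dependent delays associated with
two histories/solutions: |τ(t,x) − τ̃(t,x)| ≤ L_τ [sup_{s∈[−τ̄₀^∞,r)}‖A(s,·)−Ã(s,·)‖_∞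
+ ‖δ₀ − δ̃₀‖_∞]. -/
theorem stmt_9
    {n : ℕ} (hn : 1 ≤ n)
    (Ω : Set (EuclideanSpace ℝ (Fin n))) (hΩ : IsCompact Ω) [CompactSpace Ω] [Nonempty Ω]
    (f : C(Ω, ℝ) → C(Ω, ℝ)) (Kf : ℝ≥0) (hf_lip : LipschitzWith Kf f)
    (hf_mono : ∀ u v : C(Ω, ℝ), u ≤ v → f v ≤ f u)
    (Mbar : ℝ) (hMbar : 0 < Mbar)
    (hf_bdd : ∀ (ψ : C(Ω, ℝ)) (x : Ω), 0 < f ψ x ∧ f ψ x ≤ Mbar)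
    (α : ℝ) (hα : 0 ≤ α)
    (M₀ : ℝ) (hM₀ : 0 < M₀)
    (φ φt : ℝ → C(Ω, ℝ)) (hφ : MemLipAlpha α φ) (hφt : MemLipAlpha α φt)
    (τ₀ τ₀t : C(Ω, ℝ)) (hτ₀ : ∀ x, 0 ≤ τ₀ x) (hτ₀t : ∀ x, 0 ≤ τ₀t x)
    (hbound : lipAlphaNorm α φ + ‖τ₀‖ ≤ M₀)
    (hboundt : lipAlphaNorm α φt + ‖τ₀t‖ ≤ M₀)
    (r : EReal) (hr : 0 < r)
    (A At : ℝ → C(Ω, ℝ))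
    (hAcont : ContinuousOn A {t : ℝ | (t : EReal) < r})
    (hAtcont : ContinuousOn At {t : ℝ | (t : EReal) < r})
    (hA0 : ∀ t ≤ (0 : ℝ), A t = φ t) (hAt0 : ∀ t ≤ (0 : ℝ), At t = φt t)
    (M : ℝ)
    (hAbdd : ∀ t : ℝ, 0 ≤ t → (t : EReal) < r → ‖A t‖ ≤ M ∧ ‖At t‖ ≤ M)
    (δ₀ δ₀t : Ω → ℝ)
    (hδ₀ : ∀ x : Ω, δ₀ x = ∫ s in (-(τ₀ x))..(0 : ℝ), f (φ s) x)
    (hδ₀t : ∀ x : Ω, δ₀t x = ∫ s in (-(τ₀t x))..(0 : ℝ), f (φt s) x)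
    (τ τt : ℝ → Ω → ℝ)
    (hτ : ∀ t : ℝ, 0 ≤ t → (t : EReal) < r → ∀ x : Ω, 0 ≤ τ t x ∧
      (∫ s in (t - τ t x)..t, f (A s) x) = δ₀ x)
    (hτt : ∀ t : ℝ, 0 ≤ t → (t : EReal) < r → ∀ x : Ω, 0 ≤ τt t x ∧
      (∫ s in (t - τt t x)..t, f (At s) x) = δ₀t x) :
    ∃ Lτ : ℝ, 0 < Lτ ∧ ∀ t : ℝ, 0 ≤ t → (t : EReal) < r → ∀ x : Ω,
      |τ t x - τt t x| ≤
        Lτ * (sSup {c : ℝ | ∃ s : ℝ, -(max (⨆ y : Ω, τ₀ y) (⨆ y : Ω, τ₀t y)) ≤ s ∧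
                (s : EReal) < r ∧ c = ‖A s - At s‖} +
              ⨆ y : Ω, |δ₀ y - δ₀t y|) :=
  stmt_9_general Ω f Kf hf_lip hf_mono Mbar hMbar hf_bdd φ φt τ₀ τ₀t hτ₀ hτ₀t r hr A At hAcont
    hAtcont hA0 hAt0 M hAbdd δ₀ δ₀t hδ₀ hδ₀t τ τt hτ hτt
end

section
/- Let t ≥ 0, let φ ∈ Lip_α, and let A ∈ C((−∞,t],C(Ω)) satisfy A(s,·) = φ(s,·) for s ≤ 0 and be Lipschitz continuous on [0,t]. Define A_t(θ,·) := A(t+θ,·) for θ ≤ 0, A_{t,α}(θ,·) := e^{−α|θ|}A_t(θ,·) and φ_α(θ,·) := e^{−α|θ|}φ(θ,·). Then the following three estimates hold: (i) sup_{θ≤0}‖A_{t,α}(θ,·)‖_∞ ≤ sup_{θ∈[0,t]}‖e^{α(θ−t)}A(θ,·)‖_∞ + e^{−αt} sup_{θ≤0}‖φ_α(θ,·)‖_∞; (ii) ‖A_{t,α}‖_{Lip((−∞,0],C(Ω))} ≤ ‖A_{t,α}‖_{Lip([−t,0],C(Ω))} + e^{−αt}‖φ_α‖_{Lip((−∞,0],C(Ω))};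 (iii) ‖A_t‖_{Lip_α} ≤ sup_{θ∈[0,t]}‖e^{α(θ−t)}A(θ,·)‖_∞ + ‖A_{t,α}‖_{Lip([−t,0],C(Ω))} + e^{−αt}‖φ‖_{Lip_α}; here ‖·‖_{Lip(I,C(Ω))} denotes the Lipschitz seminorm sup_{t,s∈I,t≠s}‖·(t)−·(s)‖_∞/|t−s|. -/
/-!
For `θ ≤ -t` the segment only sees the initial history, `A_{t,α}(θ) = e^{-αt} φ_α(t + θ)`, while
on `[-t, 0]` it is `e^{αθ} A(t + θ)`; (i) follows by splitting at `-t`. A function Lipschitz on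
`(-∞, -t]` and on `[-t, 0]` is Lipschitz on `(-∞, 0]` with the larger constant, since a chord
crossing `-t` splits there; this gives (ii), and (iii) is (i) + (ii). The seminorms are `sSup`s
of real sets, which are `0` when unbounded, so each must first be shown to bound a Lipschitz
function: on `[-t, 0]` because `e^{α·}` and `A` are Lipschitz there.
-/

open scoped NNReal
open Set

/-- The Lipschitz seminorm of `χ` on a set `I`. -/
noncomputable def lipSeminormOn {Ω : Type*} [TopologicalSpace Ω] [CompactSpace Ω]
    (χ : ℝ → C(Ω, ℝ)) (I : Set ℝ) : ℝ :=
  sSup {c : ℝ | ∃ t ∈ I, ∃ s ∈ I, t ≠ s ∧ c = ‖χ t - χ s‖ / |t - s|}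

lemma LipschitzOnWith.exists_smul_of_isCompact {X E : Type*} [PseudoMetricSpace X]
    [SeminormedAddCommGroup E] [NormedSpace ℝ E] {s : Set X} (hs : IsCompact s)
    {f : X → ℝ} {g : X → E} {Kf Kg : ℝ≥0} (hf : LipschitzOnWith Kf f s)
    (hg : LipschitzOnWith Kg g s) :
    ∃ K, LipschitzOnWith K (fun x => f x • g x) s := by
  obtain ⟨Cf, hCf⟩ := hs.exists_bound_of_continuousOn hf.continuousOn
  obtain ⟨Cg, hCg⟩ := hs.exists_bound_of_continuousOn hg.continuousOn
  refine ⟨_, LipschitzOnWith.of_dist_le' (K := Kf * Cg + Cf * Kg) fun x hx y hy => ?_⟩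
  have hCf₀ : 0 ≤ Cf := (norm_nonneg _).trans (hCf x hx)
  have hdf := hf.dist_le_mul x hx y hy
  have hdg := hg.dist_le_mul x hx y hy
  rw [dist_eq_norm] at hdf hdg ⊢
  calc ‖f x • g x - f y • g y‖ = ‖(f x - f y) • g x + f y • (g x - g y)‖ := by
        rw [sub_smul, smul_sub]; abel_nf
    _ ≤ ‖f x - f y‖ * ‖g x‖ + ‖f y‖ * ‖g x - g y‖ := by
        rw [← norm_smul, ← norm_smul]; exact norm_add_le _ _
    _ ≤ (Kf * dist x y) * Cg + Cf * (Kg * dist x y) := by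
        gcongr
        · exact hCg x hx
        · exact hCf y hy
    _ = (Kf * Cg + Cf * Kg) * dist x y := by ring

lemma LipschitzOnWith.Iic_union_Icc {X : Type*} [PseudoMetricSpace X] {f : ℝ → X} {a b : ℝ}
    {K₁ K₂ : ℝ≥0} (h₁ : LipschitzOnWith K₁ f (Iic a)) (h₂ : LipschitzOnWith K₂ f (Icc a b)) :
    LipschitzOnWith (max K₁ K₂) f (Iic b) := by
  have key : ∀ u v, u ≤ v → v ≤ b → dist (f u) (f v) ≤ max K₁ K₂ * dist u v := by
    intro u v huv hvb
    rcases le_total v a with hva | hav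
    · exact (h₁.dist_le_mul u (huv.trans hva) v hva).trans (by gcongr; exact le_max_left _ _)
    rcases le_total a u with hau | hua
    · exact (h₂.dist_le_mul u ⟨hau, huv.trans hvb⟩ v ⟨hau.trans huv, hvb⟩).trans
        (by gcongr; exact le_max_right _ _)
    calc dist (f u) (f v) ≤ dist (f u) (f a) + dist (f a) (f v) := dist_triangle _ _ _
      _ ≤ K₁ * dist u a + K₂ * dist a v :=
          add_le_add (h₁.dist_le_mul u hua a self_mem_Iic)
            (h₂.dist_le_mul a ⟨le_rfl, hav.trans hvb⟩ v ⟨hav, hvb⟩)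
      _ ≤ max K₁ K₂ * dist u a + max K₁ K₂ * dist a v := by
          gcongr
          · exact le_max_left _ _
          · exact le_max_right _ _
      _ = max K₁ K₂ * dist u v := by
          simp only [Real.dist_eq]
          rw [abs_of_nonpos (by linarith), abs_of_nonpos (by linarith),
            abs_of_nonpos (by linarith)]
          ring
  refine LipschitzOnWith.of_dist_le_mul fun u hu v hv => ?_
  rcases le_total u v with huv | hvu
  · exact key u v huv hv
  · rw [dist_comm, dist_comm u]
    exact key v u hvu hu

lemma LipschitzOnWith.norm_sub_div_abs_sub_le {E : Type*} [SeminormedAddCommGroup E]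
    {f : ℝ → E} {I : Set ℝ} {K : ℝ≥0} (h : LipschitzOnWith K f I) {u v : ℝ} (hu : u ∈ I)
    (hv : v ∈ I) (huv : u ≠ v) : ‖f u - f v‖ / |u - v| ≤ K := by
  rw [div_le_iff₀ (abs_pos.2 (sub_ne_zero.2 huv)), ← dist_eq_norm, ← Real.dist_eq]
  exact h.dist_le_mul u hu v hv

section LipSeminorm

variable {Ω : Type*} [TopologicalSpace Ω] [CompactSpace Ω] {χ : ℝ → C(Ω, ℝ)} {I : Set ℝ}

lemma lipSeminormOn_nonneg : 0 ≤ lipSeminormOn χ I :=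
  Real.sSup_nonneg <| by rintro c ⟨u, -, v, -, -, rfl⟩; positivity

lemma lipSeminormOn_le {K : ℝ≥0} (h : LipschitzOnWith K χ I) : lipSeminormOn χ I ≤ K :=
  Real.sSup_le (by rintro c ⟨u, hu, v, hv, huv, rfl⟩; exact h.norm_sub_div_abs_sub_le hu hv huv)
    K.2

lemma LipschitzOnWith.lipschitzOnWith_lipSeminormOn {K : ℝ≥0} (h : LipschitzOnWith K χ I) :
    LipschitzOnWith (lipSeminormOn χ I).toNNReal χ I := by
  refine LipschitzOnWith.of_dist_le' fun u hu v hv => ?_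
  rcases eq_or_ne u v with rfl | huv
  · simp
  have hquot : ‖χ u - χ v‖ / |u - v| ≤ lipSeminormOn χ I :=
    le_csSup ⟨K, by rintro c ⟨u, hu, v, hv, huv, rfl⟩; exact h.norm_sub_div_abs_sub_le hu hv huv⟩
      ⟨u, hu, v, hv, huv, rfl⟩
  rwa [div_le_iff₀ (abs_pos.2 (sub_ne_zero.2 huv)), ← dist_eq_norm, ← Real.dist_eq] at hquot

end LipSeminorm

lemma lipAlphaNorm_eq_add {Ω : Type*} [TopologicalSpace Ω] [CompactSpace Ω] (α : ℝ)
    (φ : ℝ → C(Ω, ℝ)) :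
    lipAlphaNorm α φ = sSup {c : ℝ | ∃ t ≤ (0 : ℝ), c = ‖weightedHist α φ t‖} +
      lipSeminormOn (weightedHist α φ) (Iic 0) :=
  rfl

section WeightedHist

variable {Ω : Type*} [TopologicalSpace Ω] {α t : ℝ}

lemma weightedHist_of_nonpos (ψ : ℝ → C(Ω, ℝ)) {θ : ℝ} (hθ : θ ≤ 0) :
    weightedHist α ψ θ = Real.exp (α * θ) • ψ θ := by
  simp only [weightedHist, abs_of_nonpos hθ, mul_neg, neg_neg]

lemma weightedHist_comp_add_of_le {φ A : ℝ → C(Ω, ℝ)} (hA0 : ∀ s ≤ (0 : ℝ), A s = φ s)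
    {θ : ℝ} (hθ : θ ≤ 0) (htθ : t + θ ≤ 0) :
    weightedHist α (fun u => A (t + u)) θ = Real.exp (-(α * t)) • weightedHist α φ (t + θ) := by
  rw [weightedHist_of_nonpos _ hθ, weightedHist_of_nonpos _ htθ, hA0 _ htθ, smul_smul,
    ← Real.exp_add]
  congr 2
  ring

variable [CompactSpace Ω] {φ A : ℝ → C(Ω, ℝ)}

lemma exists_lipschitzOnWith_weightedHist_comp_add {K : ℝ≥0}
    (hA : LipschitzOnWith K A (Icc 0 t)) :
    ∃ K', LipschitzOnWith K' (weightedHist α (fun u => A (t + u))) (Icc (-t) 0) := by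
  obtain ⟨Ke, hexp⟩ : ∃ Ke, LipschitzOnWith Ke (fun θ : ℝ => Real.exp (α * θ)) (Icc (-t) 0) :=
    ContDiffOn.exists_lipschitzOnWith (n := 1) (by fun_prop) one_ne_zero (convex_Icc _ _)
      isCompact_Icc
  have hshift : LipschitzOnWith K (fun θ => A (t + θ)) (Icc (-t) 0) :=
    LipschitzOnWith.of_dist_le_mul fun u hu v hv => by
      rw [← dist_add_left t u v]
      exact hA.dist_le_mul _ ⟨by linarith [hu.1], by linarith [hu.2]⟩ _
        ⟨by linarith [hv.1], by linarith [hv.2]⟩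
  obtain ⟨K', h⟩ := hexp.exists_smul_of_isCompact isCompact_Icc hshift
  refine ⟨K', fun u hu v hv => ?_⟩
  rw [weightedHist_of_nonpos _ hu.2, weightedHist_of_nonpos _ hv.2]
  exact h hu hv

lemma sSup_norm_weightedHist_comp_add_le (hA : ContinuousOn A (Icc 0 t))
    (hφ : ∃ C : ℝ, ∀ θ ≤ (0 : ℝ), ‖weightedHist α φ θ‖ ≤ C) (hA0 : ∀ s ≤ (0 : ℝ), A s = φ s) :
    sSup {c : ℝ | ∃ θ ≤ (0 : ℝ), c = ‖weightedHist α (fun u : ℝ => A (t + u)) θ‖} ≤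
      sSup {c : ℝ | ∃ θ ∈ Icc (0 : ℝ) t, c = ‖Real.exp (α * (θ - t)) • A θ‖} +
      Real.exp (-(α * t)) * sSup {c : ℝ | ∃ θ ≤ (0 : ℝ), c = ‖weightedHist α φ θ‖} := by
  obtain ⟨C₁, hC₁⟩ := isCompact_Icc.exists_bound_of_continuousOn
    ((by fun_prop : Continuous fun θ => Real.exp (α * (θ - t))).continuousOn.smul hA)
  obtain ⟨C, hC⟩ := hφ
  have hN₁ : 0 ≤ sSup {c : ℝ | ∃ θ ∈ Icc (0 : ℝ) t, c = ‖Real.exp (α * (θ - t)) • A θ‖} :=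
    Real.sSup_nonneg (by rintro c ⟨θ, -, rfl⟩; positivity)
  have hNφ : 0 ≤ Real.exp (-(α * t)) *
      sSup {c : ℝ | ∃ θ ≤ (0 : ℝ), c = ‖weightedHist α φ θ‖} :=
    mul_nonneg (Real.exp_pos _).le (Real.sSup_nonneg (by rintro c ⟨θ, -, rfl⟩; positivity))
  refine Real.sSup_le ?_ (add_nonneg hN₁ hNφ)
  rintro c ⟨θ, hθ, rfl⟩
  rcases le_or_gt (-t) θ with hθt | hθt
  · have hrecent : ‖weightedHist α (fun u : ℝ => A (t + u)) θ‖ ≤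
        sSup {c : ℝ | ∃ θ ∈ Icc (0 : ℝ) t, c = ‖Real.exp (α * (θ - t)) • A θ‖} :=
      le_csSup ⟨C₁, by rintro c ⟨θ, hθ, rfl⟩; exact hC₁ θ hθ⟩
        ⟨t + θ, ⟨by linarith, by linarith⟩,
          by rw [weightedHist_of_nonpos _ hθ, add_sub_cancel_left]⟩
    linarith
  · rw [weightedHist_comp_add_of_le hA0 hθ (by linarith), norm_smul, Real.norm_eq_abs,
      abs_of_pos (Real.exp_pos _)]
    have hpast : ‖weightedHist α φ (t + θ)‖ ≤
        sSup {c : ℝ | ∃ θ ≤ (0 : ℝ), c = ‖weightedHist α φ θ‖} :=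
      le_csSup ⟨C, by rintro c ⟨θ, hθ, rfl⟩; exact hC θ hθ⟩ ⟨t + θ, by linarith, rfl⟩
    nlinarith [Real.exp_pos (-(α * t))]

lemma lipSeminormOn_weightedHist_comp_add_le (ht : 0 ≤ t) {K L : ℝ≥0}
    (hA : LipschitzOnWith K A (Icc 0 t)) (hφ : LipschitzOnWith L (weightedHist α φ) (Iic 0))
    (hA0 : ∀ s ≤ (0 : ℝ), A s = φ s) :
    lipSeminormOn (weightedHist α (fun u : ℝ => A (t + u))) (Iic 0) ≤
      lipSeminormOn (weightedHist α (fun u : ℝ => A (t + u))) (Icc (-t) 0) +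
      Real.exp (-(α * t)) * lipSeminormOn (weightedHist α φ) (Iic 0) := by
  obtain ⟨K', hrecent⟩ := exists_lipschitzOnWith_weightedHist_comp_add (α := α) hA
  have hφ' := hφ.lipschitzOnWith_lipSeminormOn
  have hpast : LipschitzOnWith
      (Real.exp (-(α * t)) * lipSeminormOn (weightedHist α φ) (Iic 0)).toNNReal
      (weightedHist α (fun u : ℝ => A (t + u))) (Iic (-t)) :=
    LipschitzOnWith.of_dist_le' fun u (hu : u ≤ -t) v (hv : v ≤ -t) => by
      rw [weightedHist_comp_add_of_le hA0 (by linarith) (by linarith),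
        weightedHist_comp_add_of_le hA0 (by linarith) (by linarith),
        dist_eq_norm, ← smul_sub, norm_smul, Real.norm_eq_abs, abs_of_pos (Real.exp_pos _),
        ← dist_eq_norm, mul_assoc]
      gcongr
      calc dist (weightedHist α φ (t + u)) (weightedHist α φ (t + v))
          ≤ (lipSeminormOn (weightedHist α φ) (Iic 0)).toNNReal * dist (t + u) (t + v) :=
            hφ'.dist_le_mul _ (mem_Iic.2 (by linarith)) _ (mem_Iic.2 (by linarith))
        _ = lipSeminormOn (weightedHist α φ) (Iic 0) * dist u v := by
            rw [Real.coe_toNNReal _ lipSeminormOn_nonneg, dist_add_left]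
  refine (lipSeminormOn_le (hpast.Iic_union_Icc hrecent.lipschitzOnWith_lipSeminormOn)).trans ?_
  rw [NNReal.coe_max, Real.coe_toNNReal _ (mul_nonneg (Real.exp_pos _).le lipSeminormOn_nonneg),
    Real.coe_toNNReal _ lipSeminormOn_nonneg, add_comm]
  exact max_le_add_of_nonneg (mul_nonneg (Real.exp_pos _).le lipSeminormOn_nonneg)
    lipSeminormOn_nonneg

end WeightedHist

theorem stmt_11_general
    {n : ℕ}
    (Ω : Set (EuclideanSpace ℝ (Fin n))) [CompactSpace Ω]
    (α : ℝ)
    (t : ℝ) (ht : 0 ≤ t)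
    (φ : ℝ → C(Ω, ℝ)) (hφ : MemLipAlpha α φ)
    (A : ℝ → C(Ω, ℝ))
    (hA0 : ∀ s ≤ (0 : ℝ), A s = φ s)
    (K : ℝ≥0) (hALip : LipschitzOnWith K A (Set.Icc 0 t)) :
    (sSup {c : ℝ | ∃ θ ≤ (0 : ℝ), c = ‖weightedHist α (fun u : ℝ => A (t + u)) θ‖} ≤
        sSup {c : ℝ | ∃ θ ∈ Set.Icc (0 : ℝ) t, c = ‖Real.exp (α * (θ - t)) • A θ‖} +
        Real.exp (-(α * t)) *
          sSup {c : ℝ | ∃ θ ≤ (0 : ℝ), c = ‖weightedHist α φ θ‖}) ∧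
    (lipSeminormOn (weightedHist α (fun u : ℝ => A (t + u))) (Set.Iic 0) ≤
        lipSeminormOn (weightedHist α (fun u : ℝ => A (t + u))) (Set.Icc (-t) 0) +
        Real.exp (-(α * t)) * lipSeminormOn (weightedHist α φ) (Set.Iic 0)) ∧
    (lipAlphaNorm α (fun u : ℝ => A (t + u)) ≤
        sSup {c : ℝ | ∃ θ ∈ Set.Icc (0 : ℝ) t, c = ‖Real.exp (α * (θ - t)) • A θ‖} +
        lipSeminormOn (weightedHist α (fun u : ℝ => A (t + u))) (Set.Icc (-t) 0) +
        Real.exp (-(α * t)) * lipAlphaNorm α φ) := by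
  obtain ⟨-, hφ_bdd, L, hφ_lip⟩ := hφ
  have hsup := sSup_norm_weightedHist_comp_add_le hALip.continuousOn hφ_bdd hA0
  have hlip := lipSeminormOn_weightedHist_comp_add_le ht hALip hφ_lip hA0
  refine ⟨hsup, hlip, ?_⟩
  rw [lipAlphaNorm_eq_add, lipAlphaNorm_eq_add]
  linarith

/-- the three estimates (4.1)–(4.3) for the weighted history segment
`A_{t,α}(θ) = e^{−α|θ|}A(t+θ)`. -/
theorem stmt_11
    {n : ℕ} (hn : 1 ≤ n)
    (Ω : Set (EuclideanSpace ℝ (Fin n))) (hΩ : IsCompact Ω) [CompactSpace Ω]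
    (α : ℝ) (hα : 0 ≤ α)
    (t : ℝ) (ht : 0 ≤ t)
    (φ : ℝ → C(Ω, ℝ)) (hφ : MemLipAlpha α φ)
    (A : ℝ → C(Ω, ℝ)) (hAcont : ContinuousOn A (Set.Iic t))
    (hA0 : ∀ s ≤ (0 : ℝ), A s = φ s)
    (K : ℝ≥0) (hALip : LipschitzOnWith K A (Set.Icc 0 t)) :
    (sSup {c : ℝ | ∃ θ ≤ (0 : ℝ), c = ‖weightedHist α (fun u : ℝ => A (t + u)) θ‖} ≤
        sSup {c : ℝ | ∃ θ ∈ Set.Icc (0 : ℝ) t, c = ‖Real.exp (α * (θ - t)) • A θ‖} +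
        Real.exp (-(α * t)) *
          sSup {c : ℝ | ∃ θ ≤ (0 : ℝ), c = ‖weightedHist α φ θ‖}) ∧
    (lipSeminormOn (weightedHist α (fun u : ℝ => A (t + u))) (Set.Iic 0) ≤
        lipSeminormOn (weightedHist α (fun u : ℝ => A (t + u))) (Set.Icc (-t) 0) +
        Real.exp (-(α * t)) * lipSeminormOn (weightedHist α φ) (Set.Iic 0)) ∧
    (lipAlphaNorm α (fun u : ℝ => A (t + u)) ≤
        sSup {c : ℝ | ∃ θ ∈ Set.Icc (0 : ℝ) t, c = ‖Real.exp (α * (θ - t)) • A θ‖} +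
        lipSeminormOn (weightedHist α (fun u : ℝ => A (t + u))) (Set.Icc (-t) 0) +
        Real.exp (-(α * t)) * lipAlphaNorm α φ) :=
  stmt_11_general Ω α t ht φ hφ A hA0 K hALip
end
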